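/- arXiv:2112.09684 — 4 statements merged into one kernel-verified Lean document; each statement's English description precedes it below -/
import Mathlib

section
/- Let f ∈ C([0,1], ℝ) and let μ be a finite Borel measure on [0,1]. Then for all g ∈ C([0,1],ℝ) with Q(g) < ∞ there exists h ∈ C([0,1],ℝ) with Q(h) < ∞ such that Q(h) ≤ Q(g), Lip(h) ≤ Lip(f), and ∫_0^1 (h(y) − f(y))² μ(dy) ≤ ∫_0^1 (g(y) − f(y))² μ(dy). -/
open MeasureTheory
open scoped ENNReal

/-- Piecewise affine linear representation with `n` breakpoints on `[0,1]`. -/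
def IsPLRep (f : ℝ → ℝ) (n : ℕ) (A B : Fin (n + 1) → ℝ) (q : Fin (n + 2) → ℝ) : Prop :=
  q 0 = 0 ∧ q (Fin.last (n + 1)) = 1 ∧ StrictMono q ∧
    ∀ j : Fin (n + 1), ∀ x ∈ Set.Icc (q j.castSucc) (q j.succ), f x = A j * x + B j

/-- The breakpoint number `Q(f) ∈ ℕ∞` of `f : [0,1] → ℝ`. -/
noncomputable def breakQ (f : ℝ → ℝ) : ℕ∞ :=
  sInf {m : ℕ∞ | ∃ n : ℕ, m = (n : ℕ∞) ∧
    ∃ (A B : Fin (n + 1) → ℝ) (q : Fin (n + 2) → ℝ), IsPLRep f n A B q}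

/-- The (possibly infinite) Lipschitz constant
`Lip(g) = sup_{x,y ∈ [0,1], x ≠ y} |g(x) − g(y)|/|x − y|` of `g : [0,1] → ℝ`. -/
noncomputable def lipC (g : ℝ → ℝ) : ℝ≥0∞ :=
  ⨆ (x : ℝ) (_ : x ∈ Set.Icc (0:ℝ) 1) (y : ℝ) (_ : y ∈ Set.Icc (0:ℝ) 1) (_ : x ≠ y),
    ENNReal.ofReal (|g x - g y| / |x - y|)

open Set
open scoped Classical Topology
open Filter

/-- `f` is `L`-Lipschitz on `[0,1]`. -/
def LipOn (L : ℝ) (f : ℝ → ℝ) : Prop :=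
  ∀ x ∈ Icc (0:ℝ) 1, ∀ y ∈ Icc (0:ℝ) 1, |f x - f y| ≤ L * |x - y|

/-- Finset-style piecewise-affine representation. -/
def FinRep (g : ℝ → ℝ) (s : Finset ℝ) : Prop :=
  (0:ℝ) ∈ s ∧ (1:ℝ) ∈ s ∧ ↑s ⊆ Icc (0:ℝ) 1 ∧
    ∀ u ∈ s, ∀ v ∈ s, u < v → Ioo u v ∩ ↑s = ∅ →
      ∃ p r : ℝ, ∀ x ∈ Icc u v, g x = p * x + r

/-- Left endpoints of pieces with slope exceeding `L` in absolute value. -/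
noncomputable def badPts (L : ℝ) (g : ℝ → ℝ) (s : Finset ℝ) : Finset ℝ :=
  s.filter fun u => ∃ v ∈ s, u < v ∧ Ioo u v ∩ ↑s = ∅ ∧ L * (v - u) < |g v - g u|

lemma ofReal_quot_le_lipC (f : ℝ → ℝ) {x y : ℝ} (hx : x ∈ Icc (0:ℝ) 1)
    (hy : y ∈ Icc (0:ℝ) 1) (hxy : x ≠ y) :
    ENNReal.ofReal (|f x - f y| / |x - y|) ≤ lipC f := by
  unfold lipC
  exact le_iSup_of_le x (le_iSup_of_le hx (le_iSup_of_le y (le_iSup_of_le hy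
    (le_iSup_of_le hxy le_rfl))))

lemma lip_of_lipC (f : ℝ → ℝ) (h : lipC f ≠ ⊤) : LipOn (lipC f).toReal f := by
  intro x hx y hy
  rcases eq_or_ne x y with rfl | hxy
  · simp
  · have h1 : ENNReal.ofReal (|f x - f y| / |x - y|) ≤ lipC f :=
      ofReal_quot_le_lipC f hx hy hxy
    have h2 : |f x - f y| / |x - y| ≤ (lipC f).toReal :=
      (ENNReal.ofReal_le_iff_le_toReal h).mp h1
    have h3 : 0 < |x - y| := abs_pos.mpr (sub_ne_zero.mpr hxy)
    calc |f x - f y| = (|f x - f y| / |x - y|) * |x - y| := by field_simp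
    _ ≤ (lipC f).toReal * |x - y| := mul_le_mul_of_nonneg_right h2 (le_of_lt h3)

lemma lipC_le_of_lip (L : ℝ) (h : ℝ → ℝ) (hh : LipOn L h) :
    lipC h ≤ ENNReal.ofReal L := by
  unfold lipC
  refine iSup_le fun x => iSup_le fun hx => iSup_le fun y => iSup_le fun hy =>
    iSup_le fun hxy => ?_
  refine ENNReal.ofReal_le_ofReal ?_
  have h3 : 0 < |x - y| := abs_pos.mpr (sub_ne_zero.mpr hxy)
  rw [div_le_iff₀ h3]
  exact hh x hx y hy
lemma finrep_of_rep (g : ℝ → ℝ) (n : ℕ) (A B : Fin (n + 1) → ℝ) (q : Fin (n + 2) → ℝ)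
    (hrep : IsPLRep g n A B q) : ∃ s : Finset ℝ, FinRep g s ∧ s.card ≤ n + 2 := by
  obtain ⟨h0, h1, hmono, hpiece⟩ := hrep
  refine ⟨Finset.image q Finset.univ, ⟨?_, ?_, ?_, ?_⟩, ?_⟩
  · exact Finset.mem_image.mpr ⟨0, Finset.mem_univ _, h0⟩
  · exact Finset.mem_image.mpr ⟨Fin.last _, Finset.mem_univ _, h1⟩
  · intro x hx
    obtain ⟨i, -, rfl⟩ := Finset.mem_image.mp hx
    constructor
    · rw [← h0]; exact hmono.monotone (Fin.zero_le i)
    · rw [← h1]; exact hmono.monotone (Fin.le_last i)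
  · intro u hu v hv huv hioo
    obtain ⟨i, -, rfl⟩ := Finset.mem_image.mp hu
    obtain ⟨i', -, rfl⟩ := Finset.mem_image.mp hv
    have hii : i < i' := hmono.lt_iff_lt.mp huv
    have hstep : (i' : ℕ) = (i : ℕ) + 1 := by
      by_contra hne
      have h2 : (i : ℕ) + 1 < (i' : ℕ) := lt_of_le_of_ne hii (fun hh => hne hh.symm)
      have hklt : (i : ℕ) + 1 < n + 2 := lt_trans h2 i'.isLt
      set k : Fin (n + 2) := ⟨(i : ℕ) + 1, hklt⟩ with hk
      have hmem : q k ∈ Ioo (q i) (q i') ∩ ↑(Finset.image q Finset.univ) := by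
        refine ⟨⟨hmono ?_, hmono ?_⟩, Finset.mem_coe.mpr
          (Finset.mem_image.mpr ⟨k, Finset.mem_univ _, rfl⟩)⟩
        · exact Fin.lt_def.mpr (by simp [hk])
        · exact Fin.lt_def.mpr (by simp [hk, h2])
      rw [hioo] at hmem
      exact hmem
    have hilt : (i : ℕ) < n + 1 := by
      have := i'.isLt; omega
    set j : Fin (n + 1) := ⟨(i : ℕ), hilt⟩ with hj
    have e1 : j.castSucc = i := Fin.ext (by simp [hj])
    have e2 : j.succ = i' := Fin.ext (by simp [hj, hstep])
    refine ⟨A j, B j, ?_⟩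
    intro x hx
    exact hpiece j x (by rw [e1, e2]; exact hx)
  · calc (Finset.image q Finset.univ).card ≤ Finset.univ.card := Finset.card_image_le
    _ = n + 2 := by simp
lemma rep_of_finrep (h : ℝ → ℝ) (s : Finset ℝ) (hs : FinRep h s) :
    ∃ (n : ℕ) (A B : Fin (n + 1) → ℝ) (q : Fin (n + 2) → ℝ),
      IsPLRep h n A B q ∧ n + 2 = s.card := by
  obtain ⟨h0, h1, hsub, hpiece⟩ := hs
  have hcard2 : 2 ≤ s.card := by
    have : 1 < s.card := Finset.one_lt_card.mpr ⟨0, h0, 1, h1, by norm_num⟩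
    omega
  set n : ℕ := s.card - 2 with hn
  have hcard : s.card = n + 2 := by omega
  set iso := s.orderIsoOfFin hcard with hiso
  set q : Fin (n + 2) → ℝ := fun i => (iso i : ℝ) with hq
  have hqmem : ∀ i, q i ∈ s := fun i => (iso i).2
  have hmono : StrictMono q := by
    intro a b hab
    exact Subtype.coe_lt_coe.mpr (iso.strictMono hab)
  have hsurj : ∀ x ∈ s, ∃ i, q i = x := by
    intro x hx
    exact ⟨iso.symm ⟨x, hx⟩, by simp [hq]⟩
  have hq0 : q 0 = 0 := by
    obtain ⟨i0, hi0⟩ := hsurj 0 h0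
    have hle : q 0 ≤ q i0 := hmono.monotone (Fin.zero_le i0)
    have hge : 0 ≤ q 0 := (hsub (hqmem 0)).1
    rw [hi0] at hle
    linarith
  have hq1 : q (Fin.last (n + 1)) = 1 := by
    obtain ⟨i1, hi1⟩ := hsurj 1 h1
    have hle : q i1 ≤ q (Fin.last (n + 1)) := hmono.monotone (Fin.le_last i1)
    have hge : q (Fin.last (n + 1)) ≤ 1 := (hsub (hqmem _)).2
    rw [hi1] at hle
    linarith
  have hpieces : ∀ j : Fin (n + 1), ∃ p r : ℝ,
      ∀ x ∈ Icc (q j.castSucc) (q j.succ), h x = p * x + r := by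
    intro j
    have hlt : q j.castSucc < q j.succ := hmono (Fin.castSucc_lt_succ : j.castSucc < j.succ)
    have hempt : Ioo (q j.castSucc) (q j.succ) ∩ ↑s = ∅ := by
      rw [Set.eq_empty_iff_forall_notMem]
      rintro x ⟨hxIoo, hxs⟩
      obtain ⟨i, rfl⟩ := hsurj x hxs
      have hi1 : j.castSucc < i := hmono.lt_iff_lt.mp hxIoo.1
      have hi2 : i < j.succ := hmono.lt_iff_lt.mp hxIoo.2
      have := Fin.lt_def.mp hi1
      have := Fin.lt_def.mp hi2
      simp only [Fin.coe_castSucc, Fin.val_succ] at *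
      omega
    exact hpiece _ (hqmem _) _ (hqmem _) hlt hempt
  choose A B hAB using hpieces
  exact ⟨n, A, B, q, ⟨hq0, hq1, hmono, hAB⟩, hcard.symm⟩
lemma exists_max_le (s : Finset ℝ) (x : ℝ) (w₀ : ℝ) (hw₀ : w₀ ∈ s) (hw₀x : w₀ ≤ x) :
    ∃ u, u ∈ s ∧ u ≤ x ∧ ∀ t ∈ s, t ≤ x → t ≤ u := by
  have hne : (s.filter fun w => w ≤ x).Nonempty := ⟨w₀, Finset.mem_filter.mpr ⟨hw₀, hw₀x⟩⟩
  refine ⟨(s.filter fun w => w ≤ x).max' hne, ?_, ?_, ?_⟩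
  · exact (Finset.mem_filter.mp ((s.filter fun w => w ≤ x).max'_mem hne)).1
  · exact (Finset.mem_filter.mp ((s.filter fun w => w ≤ x).max'_mem hne)).2
  · intro t ht htx
    exact Finset.le_max' (s.filter fun w => w ≤ x) t (Finset.mem_filter.mpr ⟨ht, htx⟩)

lemma exists_min_ge (s : Finset ℝ) (y : ℝ) (w₀ : ℝ) (hw₀ : w₀ ∈ s) (hw₀y : y ≤ w₀) :
    ∃ v, v ∈ s ∧ y ≤ v ∧ ∀ t ∈ s, y ≤ t → v ≤ t := by
  have hne : (s.filter fun w => y ≤ w).Nonempty := ⟨w₀, Finset.mem_filter.mpr ⟨hw₀, hw₀y⟩⟩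
  refine ⟨(s.filter fun w => y ≤ w).min' hne, ?_, ?_, ?_⟩
  · exact (Finset.mem_filter.mp ((s.filter fun w => y ≤ w).min'_mem hne)).1
  · exact (Finset.mem_filter.mp ((s.filter fun w => y ≤ w).min'_mem hne)).2
  · intro t ht hty
    exact Finset.min'_le (s.filter fun w => y ≤ w) t (Finset.mem_filter.mpr ⟨ht, hty⟩)

lemma lip_of_good (L : ℝ) (hL : 0 ≤ L) (h : ℝ → ℝ) (s : Finset ℝ) (hs : FinRep h s)
    (hbad : badPts L h s = ∅) : LipOn L h := by
  obtain ⟨h0s, h1s, hsub, hpiece⟩ := hs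
  have good : ∀ u ∈ s, ∀ v ∈ s, u < v → Ioo u v ∩ ↑s = ∅ →
      |h v - h u| ≤ L * (v - u) := by
    intro u hu v hv huv hioo
    by_contra hlt
    have hmem : u ∈ badPts L h s :=
      Finset.mem_filter.mpr ⟨hu, v, hv, huv, hioo, lt_of_not_ge hlt⟩
    rw [hbad] at hmem
    exact absurd hmem (Finset.notMem_empty u)
  have key : ∀ N : ℕ, ∀ x y : ℝ, x ∈ Icc (0:ℝ) 1 → y ∈ Icc (0:ℝ) 1 → x < y →
      (s.filter fun w => w ∈ Ioo x y).card ≤ N → |h y - h x| ≤ L * (y - x) := by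
    intro N
    induction N with
    | zero =>
      intro x y hx hy hxy hcard
      have hempty : ∀ w ∈ s, w ∉ Ioo x y := by
        intro w hw hwm
        have hmem : w ∈ s.filter fun w => w ∈ Ioo x y := Finset.mem_filter.mpr ⟨hw, hwm⟩
        have he := Finset.card_eq_zero.mp (Nat.le_zero.mp hcard)
        rw [he] at hmem
        exact absurd hmem (Finset.notMem_empty w)
      obtain ⟨u, hus, hux, humax⟩ := exists_max_le s x 0 h0s hx.1
      obtain ⟨v, hvs, hvy, hvmin⟩ := exists_min_ge s y 1 h1s hy.2
      have huv : u < v := lt_of_le_of_lt hux (lt_of_lt_of_le hxy hvy)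
      have hioo : Ioo u v ∩ ↑s = ∅ := by
        rw [Set.eq_empty_iff_forall_notMem]
        rintro w ⟨⟨hw1, hw2⟩, hws⟩
        rcases le_or_gt w x with hcase | hcase
        · have := humax w hws hcase; linarith
        · rcases le_or_gt y w with hcase2 | hcase2
          · have := hvmin w hws hcase2; linarith
          · exact hempty w hws ⟨hcase, hcase2⟩
      obtain ⟨p, r, hpr⟩ := hpiece u hus v hvs huv hioo
      have hxm : x ∈ Icc u v := ⟨hux, le_trans (le_of_lt hxy) hvy⟩
      have hym : y ∈ Icc u v := ⟨le_trans hux (le_of_lt hxy), hvy⟩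
      have hend := good u hus v hvs huv hioo
      rw [hpr u ⟨le_refl u, le_of_lt huv⟩, hpr v ⟨le_of_lt huv, le_refl v⟩] at hend
      have heq : p * v + r - (p * u + r) = p * (v - u) := by ring
      rw [heq, abs_mul, abs_of_pos (by linarith : (0:ℝ) < v - u)] at hend
      have hpL : |p| ≤ L := le_of_mul_le_mul_right (by linarith) (by linarith : (0:ℝ) < v - u)
      rw [hpr x hxm, hpr y hym]
      have heq2 : p * y + r - (p * x + r) = p * (y - x) := by ring
      rw [heq2, abs_mul, abs_of_pos (by linarith : (0:ℝ) < y - x)]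
      exact mul_le_mul_of_nonneg_right hpL (by linarith)
    | succ N ih =>
      intro x y hx hy hxy hcard
      rcases (s.filter fun w => w ∈ Ioo x y).eq_empty_or_nonempty with he | hne
      · exact ih x y hx hy hxy (by rw [he]; simp)
      · have hwmem := (s.filter fun w => w ∈ Ioo x y).min'_mem hne
        set w := (s.filter fun w => w ∈ Ioo x y).min' hne with hwdef
        have hws : w ∈ s := (Finset.mem_filter.mp hwmem).1
        have hwio : w ∈ Ioo x y := (Finset.mem_filter.mp hwmem).2
        have hwic : w ∈ Icc (0:ℝ) 1 := hsub hws
        have hsub1 : (s.filter fun t => t ∈ Ioo x w) ⊆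
            (s.filter fun t => t ∈ Ioo x y).erase w := by
          intro t ht
          obtain ⟨hts, htio⟩ := Finset.mem_filter.mp ht
          exact Finset.mem_erase.mpr ⟨ne_of_lt htio.2, Finset.mem_filter.mpr
            ⟨hts, htio.1, lt_trans htio.2 hwio.2⟩⟩
        have hsub2 : (s.filter fun t => t ∈ Ioo w y) ⊆
            (s.filter fun t => t ∈ Ioo x y).erase w := by
          intro t ht
          obtain ⟨hts, htio⟩ := Finset.mem_filter.mp ht
          exact Finset.mem_erase.mpr ⟨(ne_of_lt htio.1).symm, Finset.mem_filter.mpr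
            ⟨hts, lt_trans hwio.1 htio.1, htio.2⟩⟩
        have hce : ((s.filter fun t => t ∈ Ioo x y).erase w).card ≤ N := by
          rw [Finset.card_erase_of_mem hwmem]
          omega
        have k1 := ih x w hx hwic hwio.1 (le_trans (Finset.card_le_card hsub1) hce)
        have k2 := ih w y hwic hy hwio.2 (le_trans (Finset.card_le_card hsub2) hce)
        calc |h y - h x| ≤ |h y - h w| + |h w - h x| := abs_sub_le _ _ _
        _ ≤ L * (y - w) + L * (w - x) := add_le_add k2 k1
        _ = L * (y - x) := by ring
  intro x hx y hy
  rcases lt_trichotomy x y with hxy | hxy | hxy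
  · rw [abs_sub_comm (h x) (h y)]
    calc |h y - h x| ≤ L * (y - x) := key s.card x y hx hy hxy (Finset.card_filter_le _ _)
    _ = L * |x - y| := by
        rw [abs_sub_comm x y, abs_of_pos (show (0:ℝ) < y - x by linarith)]
  · simp [hxy]
  · calc |h x - h y| ≤ L * (x - y) := key s.card y x hy hx hxy (Finset.card_filter_le _ _)
    _ = L * |x - y| := by rw [abs_of_pos (show (0:ℝ) < x - y by linarith)]
lemma crossing_left (g ℓ : ℝ → ℝ) (hg : ContinuousOn g (Icc 0 1))
    (hℓ : Continuous ℓ) (a z : ℝ) (h0a : 0 ≤ a) (haz : a ≤ z) (hz1 : z ≤ 1)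
    (hℓz : ℓ z = g z) (hseg : ∀ x, a ≤ x → x < z → g x < ℓ x) :
    ∃ c', 0 ≤ c' ∧ c' ≤ a ∧ (∀ x, c' ≤ x → x < z → g x ≤ ℓ x) ∧
      (0 < c' → ℓ c' = g c') := by
  set U : Set ℝ := Icc 0 a ∩ (fun x => ℓ x - g x) ⁻¹' Iic 0 with hU
  have hUmem : ∀ x, x ∈ U ↔ (0 ≤ x ∧ x ≤ a) ∧ ℓ x - g x ≤ 0 := fun x => Iff.rfl
  have hUclosed : IsClosed ({0} ∪ U) := by
    refine IsClosed.union isClosed_singleton ?_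
    refine ContinuousOn.preimage_isClosed_of_isClosed ?_ isClosed_Icc isClosed_Iic
    exact hℓ.continuousOn.sub (hg.mono (Icc_subset_Icc le_rfl (le_trans haz hz1)))
  have hUbdd : BddAbove ({0} ∪ U) := by
    refine ⟨a, ?_⟩
    rintro x (hx | hx)
    · rw [Set.mem_singleton_iff] at hx; rw [hx]; exact h0a
    · exact ((hUmem x).mp hx).1.2
  have hUne : ({0} ∪ U).Nonempty := ⟨0, Or.inl rfl⟩
  set c' := sSup ({0} ∪ U) with hc'def
  have hc'mem : c' ∈ {0} ∪ U := hUclosed.csSup_mem hUne hUbdd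
  have hc'0 : 0 ≤ c' := le_csSup hUbdd (Or.inl rfl)
  have hc'a : c' ≤ a := by
    refine csSup_le hUne ?_
    rintro x (hx | hx)
    · rw [Set.mem_singleton_iff] at hx; rw [hx]; exact h0a
    · exact ((hUmem x).mp hx).1.2
  have hmid : ∀ x, c' < x → x < z → g x < ℓ x := by
    intro x hx1 hx2
    rcases le_or_gt x a with hxa | hxa
    · by_contra hcon
      push_neg at hcon
      have hxU : x ∈ U := (hUmem x).mpr
        ⟨⟨le_trans hc'0 (le_of_lt hx1), hxa⟩, by linarith⟩
      have : x ≤ c' := le_csSup hUbdd (Or.inr hxU)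
      linarith
    · exact hseg x (le_of_lt hxa) hx2
  have heqU : c' ∈ U → ℓ c' = g c' := by
    intro hc'U
    have hle : ℓ c' ≤ g c' := by have := ((hUmem c').mp hc'U).2; linarith
    rcases eq_or_lt_of_le (le_trans hc'a haz) with hcz | hcz
    · rw [hcz]; exact hℓz
    · have hnb : (𝓝[Ioo c' z] c').NeBot := by
        rw [← mem_closure_iff_nhdsWithin_neBot, closure_Ioo (ne_of_lt hcz)]
        exact ⟨le_refl c', le_of_lt hcz⟩
      have hsubset : Ioo c' z ⊆ Icc 0 1 := fun x hx =>
        ⟨le_trans hc'0 (le_of_lt hx.1), le_trans (le_of_lt hx.2) hz1⟩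
      have hcont : ContinuousWithinAt (fun x => ℓ x - g x) (Ioo c' z) c' := by
        refine (hℓ.continuousWithinAt).sub ?_
        exact (hg c' ⟨hc'0, le_trans (le_trans hc'a haz) hz1⟩).mono hsubset
      have hev : ∀ᶠ x in 𝓝[Ioo c' z] c', (0:ℝ) ≤ ℓ x - g x := by
        refine Filter.eventually_of_mem self_mem_nhdsWithin ?_
        intro x hx
        linarith [hmid x hx.1 hx.2]
      have hge : (0:ℝ) ≤ ℓ c' - g c' := ge_of_tendsto hcont hev
      linarith
  have heq : 0 < c' → ℓ c' = g c' := by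
    intro hpos
    rcases hc'mem with hmem | hmem
    · rw [Set.mem_singleton_iff] at hmem; rw [hmem] at hpos; exact absurd hpos (lt_irrefl 0)
    · exact heqU hmem
  refine ⟨c', hc'0, hc'a, ?_, heq⟩
  intro x hx1 hx2
  rcases eq_or_lt_of_le hx1 with heq2 | hlt
  · rw [← heq2]
    by_cases hc'U : c' ∈ U
    · rw [heqU hc'U]
    · rcases hc'mem with hmem | hmem
      · have : ¬ (ℓ c' - g c' ≤ 0) := by
          intro hcon
          exact hc'U ((hUmem c').mpr ⟨⟨hc'0, hc'a⟩, hcon⟩)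
        linarith [lt_of_not_ge this]
      · exact absurd hmem hc'U
  · exact le_of_lt (hmid x hlt hx2)

lemma crossing_right (g ℓ : ℝ → ℝ) (hg : ContinuousOn g (Icc 0 1))
    (hℓ : Continuous ℓ) (b z : ℝ) (hb1 : b ≤ 1) (hzb : z < b) (h0z : 0 ≤ z)
    (hℓz : ℓ z = g z) (hseg : ∀ x, z < x → x ≤ b → ℓ x < g x) :
    ∃ c, b ≤ c ∧ c ≤ 1 ∧ (∀ x, z < x → x ≤ c → ℓ x ≤ g x) ∧
      (c < 1 → ℓ c = g c) := by
  set V : Set ℝ := Icc b 1 ∩ (fun x => g x - ℓ x) ⁻¹' Iic 0 with hV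
  have hVmem : ∀ x, x ∈ V ↔ (b ≤ x ∧ x ≤ 1) ∧ g x - ℓ x ≤ 0 := fun x => Iff.rfl
  have hVclosed : IsClosed ({1} ∪ V) := by
    refine IsClosed.union isClosed_singleton ?_
    refine ContinuousOn.preimage_isClosed_of_isClosed ?_ isClosed_Icc isClosed_Iic
    exact (hg.mono (Icc_subset_Icc (le_trans h0z (le_of_lt hzb)) le_rfl)).sub hℓ.continuousOn
  have hVbdd : BddBelow ({1} ∪ V) := by
    refine ⟨b, ?_⟩
    rintro x (hx | hx)
    · rw [Set.mem_singleton_iff] at hx; rw [hx]; exact hb1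
    · exact ((hVmem x).mp hx).1.1
  have hVne : ({1} ∪ V).Nonempty := ⟨1, Or.inl rfl⟩
  set c := sInf ({1} ∪ V) with hcdef
  have hcmem : c ∈ {1} ∪ V := hVclosed.csInf_mem hVne hVbdd
  have hc1 : c ≤ 1 := csInf_le hVbdd (Or.inl rfl)
  have hcb : b ≤ c := by
    refine le_csInf hVne ?_
    rintro x (hx | hx)
    · rw [Set.mem_singleton_iff] at hx; rw [hx]; exact hb1
    · exact ((hVmem x).mp hx).1.1
  have hmid : ∀ x, z < x → x < c → ℓ x < g x := by
    intro x hx1 hx2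
    rcases le_or_gt x b with hxb | hxb
    · exact hseg x hx1 hxb
    · by_contra hcon
      push_neg at hcon
      have hxV : x ∈ V := (hVmem x).mpr
        ⟨⟨le_of_lt hxb, le_trans (le_of_lt hx2) hc1⟩, by linarith⟩
      have : c ≤ x := csInf_le hVbdd (Or.inr hxV)
      linarith
  have hzc : z < c := lt_of_lt_of_le hzb hcb
  have hlimc : ℓ c ≤ g c := by
    haveI hnb : (𝓝[Ioo z c] c).NeBot := by
      rw [← mem_closure_iff_nhdsWithin_neBot, closure_Ioo (ne_of_lt hzc)]
      exact ⟨le_of_lt hzc, le_refl c⟩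
    have hsubset : Ioo z c ⊆ Icc 0 1 := fun x hx =>
      ⟨le_trans h0z (le_of_lt hx.1), le_trans (le_of_lt hx.2) hc1⟩
    have hcont : ContinuousWithinAt (fun x => g x - ℓ x) (Ioo z c) c := by
      refine ContinuousWithinAt.sub ?_ (hℓ.continuousWithinAt)
      exact (hg c ⟨le_trans h0z (le_of_lt hzc), hc1⟩).mono hsubset
    have hev : ∀ᶠ x in 𝓝[Ioo z c] c, (0:ℝ) ≤ g x - ℓ x := by
      refine Filter.eventually_of_mem self_mem_nhdsWithin ?_
      intro x hx
      linarith [hmid x hx.1 hx.2]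
    have hge : (0:ℝ) ≤ g c - ℓ c := ge_of_tendsto hcont hev
    linarith
  have heq : c < 1 → ℓ c = g c := by
    intro hclt
    rcases hcmem with hmem | hmem
    · rw [Set.mem_singleton_iff] at hmem; rw [hmem] at hclt; exact absurd hclt (lt_irrefl 1)
    · have := ((hVmem c).mp hmem).2
      linarith
  refine ⟨c, hcb, hc1, ?_, heq⟩
  intro x hx1 hx2
  rcases eq_or_lt_of_le hx2 with heq2 | hlt
  · rw [heq2]; exact hlimc
  · exact le_of_lt (hmid x hx1 hlt)
lemma surgery (L : ℝ) (hL : 0 ≤ L) (f : ℝ → ℝ) (hflip : LipOn L f)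
    (hf : ContinuousOn f (Icc 0 1)) (g : ℝ → ℝ) (hg : ContinuousOn g (Icc 0 1))
    (s : Finset ℝ) (hs : FinRep g s) (a b : ℝ) (ha : a ∈ s) (hb : b ∈ s) (hab : a < b)
    (hadj : Ioo a b ∩ ↑s = ∅) (hslope : L * (b - a) < g b - g a) :
    ∃ (h : ℝ → ℝ) (s' : Finset ℝ), ContinuousOn h (Icc 0 1) ∧ FinRep h s' ∧
      s'.card ≤ s.card ∧ (badPts L h s').card < (badPts L g s).card ∧
      ∀ x ∈ Icc (0:ℝ) 1, |h x - f x| ≤ |g x - f x| := by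
  obtain ⟨h0s, h1s, hsub, hpiece⟩ := hs
  have ha01 : a ∈ Icc (0:ℝ) 1 := hsub ha
  have hb01 : b ∈ Icc (0:ℝ) 1 := hsub hb
  obtain ⟨p, r, hpr⟩ := hpiece a ha b hb hab hadj
  have hpL : L < p := by
    have h1 : g b - g a = p * (b - a) := by
      rw [hpr a ⟨le_refl a, le_of_lt hab⟩, hpr b ⟨le_of_lt hab, le_refl b⟩]; ring
    nlinarith
  -- the pivot point z
  obtain ⟨z, hza, hzb, hzfg, hzgf⟩ :
      ∃ z, a ≤ z ∧ z ≤ b ∧ (z < b → f z ≤ g z) ∧ (g z ≤ f z ∨ z = a) := by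
    rcases le_or_gt (f a) (g a) with hfa | hfa
    · exact ⟨a, le_refl a, le_of_lt hab, fun _ => hfa, Or.inr rfl⟩
    · rcases le_or_gt (g b) (f b) with hfb | hfb
      · exact ⟨b, le_of_lt hab, le_refl b, fun hc => absurd hc (lt_irrefl b), Or.inl hfb⟩
      · have hcont : ContinuousOn (fun x => g x - f x) (Icc a b) :=
          (hg.mono (Icc_subset_Icc ha01.1 hb01.2)).sub (hf.mono (Icc_subset_Icc ha01.1 hb01.2))
        have h0mem : (0:ℝ) ∈ Icc ((fun x => g x - f x) a) ((fun x => g x - f x) b) :=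
          ⟨by simp only; linarith, by simp only; linarith⟩
        obtain ⟨z, hzmem, hz0⟩ := intermediate_value_Icc (le_of_lt hab) hcont h0mem
        simp only at hz0
        exact ⟨z, hzmem.1, hzmem.2, fun _ => by linarith, Or.inl (by linarith)⟩
  have hz01 : z ∈ Icc (0:ℝ) 1 := ⟨le_trans ha01.1 hza, le_trans hzb hb01.2⟩
  set ℓ : ℝ → ℝ := fun x => g z + L * (x - z) with hℓdef
  have hℓz : ℓ z = g z := by simp [hℓdef]
  have hℓcont : Continuous ℓ := by
    simp only [hℓdef]
    exact continuous_const.add (continuous_const.mul (continuous_id.sub continuous_const))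
  have hgz : g z = p * z + r := hpr z ⟨hza, hzb⟩
  have hseg_left : ∀ x, a ≤ x → x < z → g x < ℓ x := by
    intro x hx1 hx2
    have hgx : g x = p * x + r := hpr x ⟨hx1, le_trans (le_of_lt hx2) hzb⟩
    simp only [hℓdef]
    rw [hgx, hgz]
    nlinarith
  have hseg_right : ∀ x, z < x → x ≤ b → ℓ x < g x := by
    intro x hx1 hx2
    have hgx : g x = p * x + r := hpr x ⟨le_trans hza (le_of_lt hx1), hx2⟩
    simp only [hℓdef]
    rw [hgx, hgz]
    nlinarith
  -- the left crossing point
  obtain ⟨c', hc'0, hc'a, hLmid, hLeq, hLor⟩ :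
      ∃ c', 0 ≤ c' ∧ c' ≤ a ∧ (∀ x, c' ≤ x → x < z → g x ≤ ℓ x) ∧
        (0 < c' → ℓ c' = g c') ∧ (g z ≤ f z ∨ z ≤ c') := by
    by_cases hLA : g z ≤ f z
    · obtain ⟨c', h1, h2, h3, h4⟩ :=
        crossing_left g ℓ hg hℓcont a z ha01.1 hza hz01.2 hℓz hseg_left
      exact ⟨c', h1, h2, h3, h4, Or.inl hLA⟩
    · rcases hzgf with hcase | hcase
      · exact absurd hcase hLA
      · refine ⟨a, ha01.1, le_refl a, ?_, ?_, Or.inr (le_of_eq hcase)⟩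
        · intro x hx1 hx2; rw [hcase] at hx2; linarith
        · intro _; rw [← hcase]; exact hℓz
  -- the right crossing point
  obtain ⟨c, hcb, hc1, hRmid, hReq, hRor⟩ :
      ∃ c, b ≤ c ∧ c ≤ 1 ∧ (∀ x, z < x → x ≤ c → ℓ x ≤ g x) ∧
        (c < 1 → ℓ c = g c) ∧ (f z ≤ g z ∨ c ≤ z) := by
    by_cases hRA : z < b
    · obtain ⟨c, h1, h2, h3, h4⟩ :=
        crossing_right g ℓ hg hℓcont b z hb01.2 hRA hz01.1 hℓz hseg_right
      exact ⟨c, h1, h2, h3, h4, Or.inl (hzfg hRA)⟩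
    · have hzb' : z = b := le_antisymm hzb (le_of_not_gt hRA)
      refine ⟨z, le_of_eq hzb'.symm, hz01.2, ?_, fun _ => hℓz, Or.inr (le_refl z)⟩
      intro x hx1 hx2; linarith
  have hLf : ∀ x ∈ Icc (0:ℝ) 1, c' ≤ x → x < z → ℓ x ≤ f x := by
    intro x hx01 hx1 hx2
    rcases hLor with hLA | hLA
    · have hlip := hflip z hz01 x hx01
      have habs : |z - x| = z - x := abs_of_pos (by linarith)
      rw [habs] at hlip
      have h2 := le_abs_self (f z - f x)
      simp only [hℓdef]
      linarith
    · linarith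
  have hRf : ∀ x ∈ Icc (0:ℝ) 1, z < x → x ≤ c → f x ≤ ℓ x := by
    intro x hx01 hx1 hx2
    rcases hRor with hRA | hRA
    · have hlip := hflip x hx01 z hz01
      have habs : |x - z| = x - z := abs_of_pos (by linarith)
      rw [habs] at hlip
      have h2 := le_abs_self (f x - f z)
      simp only [hℓdef]
      linarith
    · linarith
  have hc'z : c' ≤ z := le_trans hc'a hza
  have hzc : z ≤ c := le_trans hzb hcb
  have hc'c : c' < c := lt_of_le_of_lt hc'a (lt_of_lt_of_le hab hcb)
  set h : ℝ → ℝ := fun x => if c' ≤ x ∧ x ≤ c then ℓ x else g x with hhdef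
  have Heq1 : ∀ x, x < c' → h x = g x := by
    intro x hx
    simp only [hhdef]
    rw [if_neg]; rintro ⟨h1, -⟩; linarith
  have Heq2 : ∀ x, c' ≤ x → x ≤ c → h x = ℓ x := by
    intro x h1 h2
    simp only [hhdef]
    exact if_pos ⟨h1, h2⟩
  have Heq3 : ∀ x, c < x → h x = g x := by
    intro x hx
    simp only [hhdef]
    rw [if_neg]; rintro ⟨-, h2⟩; linarith
  have Heqc' : 0 < c' → h c' = g c' := by
    intro hpos
    rw [Heq2 c' (le_refl c') (le_of_lt hc'c)]
    exact hLeq hpos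
  have Heqc : c < 1 → h c = g c := by
    intro hlt
    rw [Heq2 c (le_of_lt hc'c) (le_refl c)]
    exact hReq hlt
  set s' : Finset ℝ := (s.filter fun x => x ≤ c' ∨ c ≤ x) ∪ {c', c} with hs'def
  have hmem' : ∀ x : ℝ, x ∈ s' ↔ ((x ∈ s ∧ (x ≤ c' ∨ c ≤ x)) ∨ x = c' ∨ x = c) := by
    intro x
    simp only [hs'def, Finset.mem_union, Finset.mem_filter, Finset.mem_insert,
      Finset.mem_singleton]
  have hc'm : c' ∈ s' := (hmem' c').mpr (Or.inr (Or.inl rfl))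
  have hcm : c ∈ s' := (hmem' c).mpr (Or.inr (Or.inr rfl))
  have ha1 : a ≤ 1 := le_trans (le_of_lt hab) hb01.2
  have h0m : (0:ℝ) ∈ s' := (hmem' 0).mpr (Or.inl ⟨h0s, Or.inl hc'0⟩)
  have h1m : (1:ℝ) ∈ s' := (hmem' 1).mpr (Or.inl ⟨h1s, Or.inr hc1⟩)
  have hs'sub : ↑s' ⊆ Icc (0:ℝ) 1 := by
    intro x hx
    rcases (hmem' x).mp (Finset.mem_coe.mp hx) with ⟨h1, -⟩ | h1 | h1
    · exact hsub h1
    · rw [h1]; exact ⟨hc'0, le_trans hc'a ha1⟩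
    · rw [h1]; exact ⟨le_trans (le_trans hb01.1 hcb) (le_refl c) |>.trans (le_refl c), hc1⟩
  have htri : ∀ u ∈ s', ∀ v ∈ s', u < v → Ioo u v ∩ ↑s' = ∅ →
      (v ≤ c' ∧ u ∈ s) ∨ (u = c' ∧ v = c) ∨ (c ≤ u ∧ v ∈ s ∧ (u ∈ s ∨ u = c)) := by
    intro u hu v hv huv hioo
    have hioo' : ∀ t, t ∈ s' → t ∉ Ioo u v := by
      intro t hts htio
      rw [Set.eq_empty_iff_forall_notMem] at hioo
      exact hioo t ⟨htio, Finset.mem_coe.mpr hts⟩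
    rcases le_or_gt v c' with hvc' | hvc'
    · refine Or.inl ⟨hvc', ?_⟩
      rcases (hmem' u).mp hu with ⟨h1, -⟩ | h1 | h1
      · exact h1
      · exfalso; rw [h1] at huv; linarith
      · exfalso; rw [h1] at huv; linarith
    · have huc' : c' ≤ u := by
        by_contra hcon
        push_neg at hcon
        exact hioo' c' hc'm ⟨hcon, hvc'⟩
      rcases eq_or_lt_of_le huc' with hueq | hult
      · refine Or.inr (Or.inl ⟨hueq.symm, ?_⟩)
        have hvc : c ≤ v := by
          rcases (hmem' v).mp hv with ⟨h1, h2⟩ | h1 | h1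
          · rcases h2 with h2 | h2
            · linarith
            · exact h2
          · exfalso; rw [h1] at hvc'; exact absurd hvc' (lt_irrefl c')
          · rw [h1]
        rcases eq_or_lt_of_le hvc with hveq | hvlt
        · exact hveq.symm
        · exfalso
          exact hioo' c hcm ⟨by rw [← hueq]; exact hc'c, hvlt⟩
      · refine Or.inr (Or.inr ?_)
        have hcu : c ≤ u := by
          rcases (hmem' u).mp hu with ⟨h1, h2⟩ | h1 | h1
          · rcases h2 with h2 | h2
            · exfalso; linarith
            · exact h2
          · exfalso; rw [h1] at hult; exact absurd hult (lt_irrefl c')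
          · rw [h1]
        refine ⟨hcu, ?_, ?_⟩
        · rcases (hmem' v).mp hv with ⟨h1, -⟩ | h1 | h1
          · exact h1
          · exfalso; rw [h1] at huv; linarith
          · exfalso; rw [h1] at huv; linarith
        · rcases (hmem' u).mp hu with ⟨h1, -⟩ | h1 | h1
          · exact Or.inl h1
          · exfalso; rw [h1] at hult; exact absurd hult (lt_irrefl c')
          · exact Or.inr h1
  have hfinrep : FinRep h s' := by
    refine ⟨h0m, h1m, hs'sub, ?_⟩
    intro u hu v hv huv hioo
    rcases htri u hu v hv huv hioo with ⟨hvc', hus⟩ | ⟨hueq, hveq⟩ | ⟨hcu, hvs, huor⟩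
    · have hu0 : 0 ≤ u := (hsub hus).1
      have hv1 : v ≤ 1 := le_trans hvc' (le_trans hc'a ha1)
      obtain ⟨w, hws, hvw, hwmin⟩ := exists_min_ge s v 1 h1s hv1
      have huw : u < w := lt_of_lt_of_le huv hvw
      have hioow : Ioo u w ∩ ↑s = ∅ := by
        rw [Set.eq_empty_iff_forall_notMem]
        rintro t ⟨⟨ht1, ht2⟩, hts⟩
        rcases le_or_gt v t with hvt | hvt
        · linarith [hwmin t (Finset.mem_coe.mp hts) hvt]
        · have hts' : t ∈ s' := (hmem' t).mpr
            (Or.inl ⟨Finset.mem_coe.mp hts, Or.inl (le_trans (le_of_lt hvt) hvc')⟩)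
          rw [Set.eq_empty_iff_forall_notMem] at hioo
          exact hioo t ⟨⟨ht1, hvt⟩, Finset.mem_coe.mpr hts'⟩
      obtain ⟨p', r', hp'⟩ := hpiece u hus w hws huw hioow
      refine ⟨p', r', ?_⟩
      intro x hx
      have hhg : h x = g x := by
        rcases lt_or_eq_of_le (le_trans hx.2 hvc') with hcase | hcase
        · exact Heq1 x hcase
        · rw [hcase]
          have hpos : 0 < c' := by linarith [hx.1, hx.2]
          exact Heqc' hpos
      rw [hhg]
      exact hp' x ⟨hx.1, le_trans hx.2 hvw⟩
    · refine ⟨L, g z - L * z, ?_⟩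
      intro x hx
      rw [Heq2 x (by rw [← hueq]; exact hx.1) (by rw [← hveq]; exact hx.2)]
      simp only [hℓdef]; ring
    · have hu0 : 0 ≤ u := le_trans (le_trans hb01.1 hcb) hcu
      obtain ⟨P, hPs, hPu, hPmax⟩ := exists_max_le s u 0 h0s hu0
      have hPv : P < v := lt_of_le_of_lt hPu huv
      have hv1 : v ≤ 1 := (hsub hvs).2
      have hioow : Ioo P v ∩ ↑s = ∅ := by
        rw [Set.eq_empty_iff_forall_notMem]
        rintro t ⟨⟨ht1, ht2⟩, hts⟩
        rcases le_or_gt t u with htu | htu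
        · linarith [hPmax t (Finset.mem_coe.mp hts) htu]
        · have hts' : t ∈ s' := (hmem' t).mpr
            (Or.inl ⟨Finset.mem_coe.mp hts, Or.inr (le_trans hcu (le_of_lt htu))⟩)
          rw [Set.eq_empty_iff_forall_notMem] at hioo
          exact hioo t ⟨⟨htu, ht2⟩, Finset.mem_coe.mpr hts'⟩
      obtain ⟨p', r', hp'⟩ := hpiece P hPs v hvs hPv hioow
      refine ⟨p', r', ?_⟩
      intro x hx
      have hhg : h x = g x := by
        rcases eq_or_lt_of_le (le_trans hcu hx.1) with hcase | hcase
        · rw [← hcase]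
          exact Heqc (by linarith)
        · exact Heq3 x hcase
      rw [hhg]
      exact hp' x ⟨le_trans hPu hx.1, hx.2⟩
  have hcard2 : 2 ≤ s.card := by
    have : 1 < s.card := Finset.one_lt_card.mpr ⟨a, ha, b, hb, ne_of_lt hab⟩
    omega
  have hcard : s'.card ≤ s.card := by
    by_cases hc's : c' ∈ s <;> by_cases hcs : c ∈ s
    · refine Finset.card_le_card ?_
      intro x hx
      rcases (hmem' x).mp hx with ⟨h1, -⟩ | h1 | h1
      · exact h1
      · rw [h1]; exact hc's
      · rw [h1]; exact hcs
    · have hbc : b < c := lt_of_le_of_ne hcb (fun hh => hcs (hh ▸ hb))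
      have hsubset : s' ⊆ insert c (s.erase b) := by
        intro x hx
        rcases (hmem' x).mp hx with ⟨h1, h2⟩ | h1 | h1
        · refine Finset.mem_insert_of_mem (Finset.mem_erase.mpr ⟨?_, h1⟩)
          rcases h2 with h2 | h2
          · intro hh; rw [hh] at h2; linarith
          · intro hh; rw [hh] at h2; linarith
        · rw [h1]
          refine Finset.mem_insert_of_mem (Finset.mem_erase.mpr ⟨?_, hc's⟩)
          intro hh; rw [hh] at hc'a; linarith
        · rw [h1]; exact Finset.mem_insert_self c _
      calc s'.card ≤ (insert c (s.erase b)).card := Finset.card_le_card hsubset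
      _ ≤ (s.erase b).card + 1 := Finset.card_insert_le _ _
      _ = s.card := by rw [Finset.card_erase_of_mem hb]; omega
    · have hc'lta : c' < a := lt_of_le_of_ne hc'a (fun hh => hc's (hh ▸ ha))
      have hsubset : s' ⊆ insert c' (s.erase a) := by
        intro x hx
        rcases (hmem' x).mp hx with ⟨h1, h2⟩ | h1 | h1
        · refine Finset.mem_insert_of_mem (Finset.mem_erase.mpr ⟨?_, h1⟩)
          rcases h2 with h2 | h2
          · intro hh; rw [hh] at h2; linarith
          · intro hh; rw [hh] at h2; linarith [lt_of_lt_of_le hab hcb]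
        · rw [h1]; exact Finset.mem_insert_self c' _
        · rw [h1]
          refine Finset.mem_insert_of_mem (Finset.mem_erase.mpr ⟨?_, hcs⟩)
          intro hh; rw [hh] at hcb; linarith
      calc s'.card ≤ (insert c' (s.erase a)).card := Finset.card_le_card hsubset
      _ ≤ (s.erase a).card + 1 := Finset.card_insert_le _ _
      _ = s.card := by rw [Finset.card_erase_of_mem ha]; omega
    · have hbc : b < c := lt_of_le_of_ne hcb (fun hh => hcs (hh ▸ hb))
      have hc'lta : c' < a := lt_of_le_of_ne hc'a (fun hh => hc's (hh ▸ ha))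
      have hbmem : b ∈ s.erase a := Finset.mem_erase.mpr ⟨(ne_of_lt hab).symm, hb⟩
      have hsubset : s' ⊆ insert c' (insert c ((s.erase a).erase b)) := by
        intro x hx
        rcases (hmem' x).mp hx with ⟨h1, h2⟩ | h1 | h1
        · refine Finset.mem_insert_of_mem (Finset.mem_insert_of_mem ?_)
          refine Finset.mem_erase.mpr ⟨?_, Finset.mem_erase.mpr ⟨?_, h1⟩⟩
          · rcases h2 with h2 | h2
            · intro hh; rw [hh] at h2; linarith
            · intro hh; rw [hh] at h2; linarith
          · rcases h2 with h2 | h2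
            · intro hh; rw [hh] at h2; linarith
            · intro hh; rw [hh] at h2; linarith
        · rw [h1]; exact Finset.mem_insert_self c' _
        · rw [h1]; exact Finset.mem_insert_of_mem (Finset.mem_insert_self c _)
      calc s'.card ≤ (insert c' (insert c ((s.erase a).erase b))).card :=
          Finset.card_le_card hsubset
      _ ≤ (insert c ((s.erase a).erase b)).card + 1 := Finset.card_insert_le _ _
      _ ≤ ((s.erase a).erase b).card + 2 := by linarith [Finset.card_insert_le c ((s.erase a).erase b)]
      _ = s.card := by
          rw [Finset.card_erase_of_mem hbmem, Finset.card_erase_of_mem ha]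
          omega
  have hpt : ∀ x ∈ Icc (0:ℝ) 1, |h x - f x| ≤ |g x - f x| := by
    intro x hx01
    by_cases hxm : c' ≤ x ∧ x ≤ c
    · rw [Heq2 x hxm.1 hxm.2]
      rcases lt_trichotomy x z with hlt | heqz | hgt
      · have h1 := hLmid x hxm.1 hlt
        have h2 := hLf x hx01 hxm.1 hlt
        rw [abs_sub_comm (ℓ x), abs_of_nonneg (by linarith : (0:ℝ) ≤ f x - ℓ x),
          abs_sub_comm (g x), abs_of_nonneg (by linarith : (0:ℝ) ≤ f x - g x)]
        linarith
      · rw [heqz, hℓz]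
      · have h1 := hRmid x hgt hxm.2
        have h2 := hRf x hx01 hgt hxm.2
        rw [abs_of_nonneg (by linarith : (0:ℝ) ≤ ℓ x - f x),
          abs_of_nonneg (by linarith : (0:ℝ) ≤ g x - f x)]
        linarith
    · have hhg : h x = g x := by
        simp only [hhdef]; rw [if_neg hxm]
      rw [hhg]
  have hhcont : ContinuousOn h (Icc 0 1) := by
    have hcover : Icc (0:ℝ) 1 ⊆ Icc 0 c' ∪ (Icc c' c ∪ Icc c 1) := by
      intro y hy
      rcases le_or_gt y c' with hcase | hcase
      · exact Or.inl ⟨hy.1, hcase⟩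
      · rcases le_or_gt y c with hcase2 | hcase2
        · exact Or.inr (Or.inl ⟨le_of_lt hcase, hcase2⟩)
        · exact Or.inr (Or.inr ⟨le_of_lt hcase2, hy.2⟩)
    intro x hx
    refine ContinuousWithinAt.mono ?_ hcover
    refine ContinuousWithinAt.union ?_ (ContinuousWithinAt.union ?_ ?_)
    · by_cases hxA : x ∈ Icc (0:ℝ) c'
      · rcases eq_or_lt_of_le hc'0 with hc'00 | hc'pos
        · have hA : Icc (0:ℝ) c' = {0} := by rw [← hc'00, Icc_self]
          rw [hA]
          have hx0 : x = 0 := by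
            rw [hA] at hxA; exact hxA
          rw [hx0]
          exact continuousWithinAt_singleton
        · have hAsub : Icc (0:ℝ) c' ⊆ Icc 0 1 := Icc_subset_Icc le_rfl (le_trans hc'a ha1)
          refine ContinuousWithinAt.congr ((hg x hx).mono hAsub) ?_ ?_
          · intro y hy
            rcases lt_or_eq_of_le hy.2 with hcase | hcase
            · exact Heq1 y hcase
            · rw [hcase]; exact Heqc' hc'pos
          · rcases lt_or_eq_of_le hxA.2 with hcase | hcase
            · exact Heq1 x hcase
            · rw [hcase]; exact Heqc' hc'pos
      · exact continuousWithinAt_of_notMem_closure (by rwa [isClosed_Icc.closure_eq])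
    · by_cases hxB : x ∈ Icc c' c
      · refine ContinuousWithinAt.congr hℓcont.continuousWithinAt ?_ ?_
        · intro y hy; exact Heq2 y hy.1 hy.2
        · exact Heq2 x hxB.1 hxB.2
      · exact continuousWithinAt_of_notMem_closure (by rwa [isClosed_Icc.closure_eq])
    · by_cases hxC : x ∈ Icc c 1
      · rcases eq_or_lt_of_le hc1 with hceq | hclt
        · have hC : Icc c (1:ℝ) = {1} := by rw [hceq, Icc_self]
          rw [hC]
          have hx1 : x = 1 := by rw [hC] at hxC; exact hxC
          rw [hx1]
          exact continuousWithinAt_singleton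
        · have hCsub : Icc c (1:ℝ) ⊆ Icc 0 1 :=
            Icc_subset_Icc (le_trans hb01.1 hcb) le_rfl
          refine ContinuousWithinAt.congr ((hg x hx).mono hCsub) ?_ ?_
          · intro y hy
            rcases eq_or_lt_of_le hy.1 with hcase | hcase
            · rw [← hcase]; exact Heqc hclt
            · exact Heq3 y hcase
          · rcases eq_or_lt_of_le hxC.1 with hcase | hcase
            · rw [← hcase]; exact Heqc hclt
            · exact Heq3 x hcase
      · exact continuousWithinAt_of_notMem_closure (by rwa [isClosed_Icc.closure_eq])
  have hA_bad : a ∈ badPts L g s := by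
    refine Finset.mem_filter.mpr ⟨ha, b, hb, hab, hadj, ?_⟩
    calc L * (b - a) < g b - g a := hslope
    _ ≤ |g b - g a| := le_abs_self _
  obtain ⟨P, hPs, hPc, hPmax⟩ := exists_max_le s c b hb hcb
  have hPb : b ≤ P := hPmax b hb hcb
  have hbadmap : ∀ u ∈ badPts L h s', (if u = c then P else u) ∈ (badPts L g s).erase a := by
    intro u hu
    obtain ⟨hus', v, hvs', huv, hioo', hbad⟩ := Finset.mem_filter.mp hu
    rcases htri u hus' v hvs' huv hioo' with ⟨hvc', hus⟩ | ⟨hueq, hveq⟩ | ⟨hcu, hvs, huor⟩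
    · -- left piece : u < v ≤ c'
      have huc' : u < c' := lt_of_lt_of_le huv hvc'
      have hunec : u ≠ c := by intro hh; rw [hh] at huc'; linarith
      rw [if_neg hunec]
      have hu0 : 0 ≤ u := (hsub hus).1
      refine Finset.mem_erase.mpr ⟨?_, ?_⟩
      · intro hh; rw [hh] at huc'; linarith
      · have hhu : h u = g u := Heq1 u huc'
        have hhv : h v = g v := by
          rcases lt_or_eq_of_le hvc' with hcase | hcase
          · exact Heq1 v hcase
          · rw [hcase]; exact Heqc' (by linarith)
        rw [hhu, hhv] at hbad
        have hv1 : v ≤ 1 := le_trans hvc' (le_trans hc'a ha1)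
        obtain ⟨w, hws, hvw, hwmin⟩ := exists_min_ge s v 1 h1s hv1
        have huw : u < w := lt_of_lt_of_le huv hvw
        have hioow : Ioo u w ∩ ↑s = ∅ := by
          rw [Set.eq_empty_iff_forall_notMem]
          rintro t ⟨⟨ht1, ht2⟩, hts⟩
          rcases le_or_gt v t with hvt | hvt
          · linarith [hwmin t (Finset.mem_coe.mp hts) hvt]
          · have hts' : t ∈ s' := (hmem' t).mpr
              (Or.inl ⟨Finset.mem_coe.mp hts, Or.inl (le_trans (le_of_lt hvt) hvc')⟩)
            rw [Set.eq_empty_iff_forall_notMem] at hioo'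
            exact hioo' t ⟨⟨ht1, hvt⟩, Finset.mem_coe.mpr hts'⟩
        obtain ⟨p', r', hp'⟩ := hpiece u hus w hws huw hioow
        have e1 : g v - g u = p' * (v - u) := by
          rw [hp' v ⟨le_of_lt huv, hvw⟩, hp' u ⟨le_refl u, le_of_lt huw⟩]; ring
        have e2 : g w - g u = p' * (w - u) := by
          rw [hp' w ⟨le_of_lt huw, le_refl w⟩, hp' u ⟨le_refl u, le_of_lt huw⟩]; ring
        have hLp' : L < |p'| := by
          rw [e1, abs_mul, abs_of_pos (by linarith : (0:ℝ) < v - u)] at hbad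
          exact lt_of_mul_lt_mul_right hbad (by linarith)
        refine Finset.mem_filter.mpr ⟨hus, w, hws, huw, hioow, ?_⟩
        rw [e2, abs_mul, abs_of_pos (by linarith : (0:ℝ) < w - u)]
        exact mul_lt_mul_of_pos_right hLp' (by linarith)
    · -- the straight piece [c', c] is never bad
      exfalso
      have h1 : h u = ℓ u := Heq2 u (le_of_eq hueq.symm) (by rw [hueq]; exact le_of_lt hc'c)
      have h2 : h v = ℓ v := Heq2 v (by rw [hveq]; exact le_of_lt hc'c) (le_of_eq hveq)
      rw [h1, h2] at hbad
      have e : ℓ v - ℓ u = L * (v - u) := by simp only [hℓdef]; ring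
      rw [e, abs_of_nonneg (mul_nonneg hL (by linarith))] at hbad
      exact absurd hbad (lt_irrefl _)
    · -- right region : c ≤ u
      by_cases huc : u = c
      · rw [if_pos huc]
        subst huc
        have hv1 : v ≤ 1 := (hsub hvs).2
        have hu1lt : u < 1 := lt_of_lt_of_le huv hv1
        have hhu : h u = g u := Heqc hu1lt
        have hhv : h v = g v := Heq3 v huv
        rw [hhu, hhv] at hbad
        have hPv : P < v := lt_of_le_of_lt hPc huv
        have hioow : Ioo P v ∩ ↑s = ∅ := by
          rw [Set.eq_empty_iff_forall_notMem]
          rintro t ⟨⟨ht1, ht2⟩, hts⟩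
          rcases le_or_gt t u with htu | htu
          · linarith [hPmax t (Finset.mem_coe.mp hts) htu]
          · have hts' : t ∈ s' := (hmem' t).mpr
              (Or.inl ⟨Finset.mem_coe.mp hts, Or.inr (le_of_lt htu)⟩)
            rw [Set.eq_empty_iff_forall_notMem] at hioo'
            exact hioo' t ⟨⟨htu, ht2⟩, Finset.mem_coe.mpr hts'⟩
        obtain ⟨p', r', hp'⟩ := hpiece P hPs v hvs hPv hioow
        have e1 : g v - g u = p' * (v - u) := by
          rw [hp' v ⟨le_of_lt hPv, le_refl v⟩, hp' u ⟨hPc, le_of_lt huv⟩]; ring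
        have e2 : g v - g P = p' * (v - P) := by
          rw [hp' v ⟨le_of_lt hPv, le_refl v⟩, hp' P ⟨le_refl P, le_of_lt hPv⟩]; ring
        have hLp' : L < |p'| := by
          rw [e1, abs_mul, abs_of_pos (by linarith : (0:ℝ) < v - u)] at hbad
          exact lt_of_mul_lt_mul_right hbad (by linarith)
        refine Finset.mem_erase.mpr ⟨?_, ?_⟩
        · intro hh; rw [hh] at hPb; linarith
        · refine Finset.mem_filter.mpr ⟨hPs, v, hvs, hPv, hioow, ?_⟩
          rw [e2, abs_mul, abs_of_pos (by linarith : (0:ℝ) < v - P)]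
          exact mul_lt_mul_of_pos_right hLp' (by linarith)
      · rw [if_neg huc]
        have hcu' : c < u := lt_of_le_of_ne hcu (Ne.symm huc)
        have hus : u ∈ s := by
          rcases huor with hcase | hcase
          · exact hcase
          · exact absurd hcase huc
        have hhu : h u = g u := Heq3 u hcu'
        have hhv : h v = g v := Heq3 v (by linarith)
        rw [hhu, hhv] at hbad
        have hioow : Ioo u v ∩ ↑s = ∅ := by
          rw [Set.eq_empty_iff_forall_notMem]
          rintro t ⟨⟨ht1, ht2⟩, hts⟩
          have hts' : t ∈ s' := (hmem' t).mpr
            (Or.inl ⟨Finset.mem_coe.mp hts, Or.inr (by linarith)⟩)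
          rw [Set.eq_empty_iff_forall_notMem] at hioo'
          exact hioo' t ⟨⟨ht1, ht2⟩, Finset.mem_coe.mpr hts'⟩
        refine Finset.mem_erase.mpr ⟨?_, ?_⟩
        · intro hh; rw [hh] at hcu'; linarith [lt_of_lt_of_le hab hcb]
        · exact Finset.mem_filter.mpr ⟨hus, v, hvs, huv, hioow, hbad⟩
  have hbadlt : (badPts L h s').card < (badPts L g s).card := by
    have hinj : Set.InjOn (fun u => if u = c then P else u) ↑(badPts L h s') := by
      have haux : ∀ u ∈ badPts L h s', u ≠ c → b ≤ u → u ≤ c → False := by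
        intro u hu hunec hbu huc
        have hus' : u ∈ s' := Finset.mem_of_mem_filter u hu
        rcases (hmem' u).mp hus' with ⟨-, h2⟩ | h1 | h1
        · rcases h2 with h2 | h2
          · have hba : b ≤ a := le_trans hbu (le_trans h2 hc'a); linarith
          · exact hunec (le_antisymm huc h2)
        · rw [h1] at hbu; linarith [lt_of_le_of_lt hc'a (lt_of_lt_of_le hab (le_refl b))]
        · exact hunec h1
      intro u1 hu1 u2 hu2 heq12
      by_cases h1c : u1 = c <;> by_cases h2c : u2 = c
      · rw [h1c, h2c]
      · exfalso
        simp only [if_pos h1c, if_neg h2c] at heq12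
        exact haux u2 (Finset.mem_coe.mp hu2) h2c (heq12 ▸ hPb) (heq12 ▸ hPc)
      · exfalso
        simp only [if_neg h1c, if_pos h2c] at heq12
        exact haux u1 (Finset.mem_coe.mp hu1) h1c (heq12 ▸ hPb : b ≤ u1)
          (heq12 ▸ hPc : u1 ≤ c)
      · simp only [if_neg h1c, if_neg h2c] at heq12
        exact heq12
    calc (badPts L h s').card ≤ ((badPts L g s).erase a).card :=
        Finset.card_le_card_of_injOn _ hbadmap hinj
    _ < (badPts L g s).card := by
        rw [Finset.card_erase_of_mem hA_bad]
        have hpos : 0 < (badPts L g s).card := Finset.card_pos.mpr ⟨a, hA_bad⟩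
        omega
  exact ⟨h, s', hhcont, hfinrep, hcard, hbadlt, hpt⟩
lemma finrep_neg (g : ℝ → ℝ) (s : Finset ℝ) (hs : FinRep g s) :
    FinRep (fun x => - g x) s := by
  obtain ⟨h0, h1, hsub, hp⟩ := hs
  refine ⟨h0, h1, hsub, ?_⟩
  intro u hu v hv huv hioo
  obtain ⟨p, r, hpr⟩ := hp u hu v hv huv hioo
  exact ⟨-p, -r, fun x hx => by show -g x = -p * x + -r; rw [hpr x hx]; ring⟩

lemma badPts_neg (L : ℝ) (g : ℝ → ℝ) (s : Finset ℝ) :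
    badPts L (fun x => - g x) s = badPts L g s := by
  apply Finset.filter_congr
  intro u _
  constructor
  · rintro ⟨v, hvs, huv, hioo, hlt⟩
    refine ⟨v, hvs, huv, hioo, ?_⟩
    have : -g v - -g u = -(g v - g u) := by ring
    rwa [this, abs_neg] at hlt
  · rintro ⟨v, hvs, huv, hioo, hlt⟩
    refine ⟨v, hvs, huv, hioo, ?_⟩
    have : -g v - -g u = -(g v - g u) := by ring
    rwa [this, abs_neg]

lemma lipOn_neg (L : ℝ) (f : ℝ → ℝ) (hf : LipOn L f) : LipOn L (fun x => - f x) := by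
  intro x hx y hy
  have := hf x hx y hy
  have heq : -f x - -f y = -(f x - f y) := by ring
  rwa [heq, abs_neg]

lemma main_induction (L : ℝ) (hL : 0 ≤ L) (f : ℝ → ℝ) (hflip : LipOn L f)
    (hf : ContinuousOn f (Icc 0 1)) :
    ∀ (m : ℕ) (g : ℝ → ℝ), ContinuousOn g (Icc 0 1) → ∀ s : Finset ℝ, FinRep g s →
      (badPts L g s).card ≤ m →
      ∃ (h : ℝ → ℝ) (s' : Finset ℝ), ContinuousOn h (Icc 0 1) ∧ FinRep h s' ∧
        s'.card ≤ s.card ∧ badPts L h s' = ∅ ∧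
        ∀ x ∈ Icc (0:ℝ) 1, |h x - f x| ≤ |g x - f x| := by
  intro m
  induction m with
  | zero =>
    intro g hg s hsrep hcard
    exact ⟨g, s, hg, hsrep, le_refl _, Finset.card_eq_zero.mp (Nat.le_zero.mp hcard),
      fun x _ => le_refl _⟩
  | succ m ih =>
    intro g hg s hsrep hcard
    rcases (badPts L g s).eq_empty_or_nonempty with hempty | hne
    · exact ⟨g, s, hg, hsrep, le_refl _, hempty, fun x _ => le_refl _⟩
    · obtain ⟨u, hu⟩ := hne
      obtain ⟨hus, v, hvs, huv, hioo, hslope⟩ := Finset.mem_filter.mp hu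
      by_cases hsgn : L * (v - u) < g v - g u
      · obtain ⟨h1, s1, hcont1, hrep1, hcards1, hbad1, hpt1⟩ :=
          surgery L hL f hflip hf g hg s hsrep u v hus hvs huv hioo hsgn
        obtain ⟨h2, s2, hcont2, hrep2, hcards2, hbad2, hpt2⟩ :=
          ih h1 hcont1 s1 hrep1 (by omega)
        exact ⟨h2, s2, hcont2, hrep2, le_trans hcards2 hcards1, hbad2,
          fun x hx => le_trans (hpt2 x hx) (hpt1 x hx)⟩
      · have hslope' : L * (v - u) < (fun x => - g x) v - (fun x => - g x) u := by
          simp only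
          rcases abs_cases (g v - g u) with ⟨he, -⟩ | ⟨he, -⟩
          · rw [he] at hslope; exact absurd hslope hsgn
          · rw [he] at hslope; linarith
        obtain ⟨h1, s1, hcont1, hrep1, hcards1, hbad1, hpt1⟩ :=
          surgery L hL (fun x => - f x) (lipOn_neg L f hflip) hf.neg
            (fun x => - g x) hg.neg s (finrep_neg g s hsrep) u v hus hvs huv hioo hslope'
        rw [badPts_neg] at hbad1
        have hrep1' : FinRep (fun x => - h1 x) s1 := finrep_neg h1 s1 hrep1
        have hbadeq : badPts L (fun x => - h1 x) s1 = badPts L h1 s1 := badPts_neg L h1 s1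
        obtain ⟨h2, s2, hcont2, hrep2, hcards2, hbad2, hpt2⟩ :=
          ih (fun x => - h1 x) hcont1.neg s1 hrep1' (by rw [hbadeq]; omega)
        refine ⟨h2, s2, hcont2, hrep2, le_trans hcards2 hcards1, hbad2, ?_⟩
        intro x hx
        refine le_trans (hpt2 x hx) ?_
        have h1eq : -h1 x - f x = -(h1 x - - f x) := by ring
        have hgeq : -g x - -f x = -(g x - f x) := by ring
        calc |-h1 x - f x| = |h1 x - - f x| := by rw [h1eq, abs_neg]
        _ ≤ |-g x - - f x| := hpt1 x hx
        _ = |g x - f x| := by rw [hgeq, abs_neg]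
lemma breakQ_le_of_rep (h : ℝ → ℝ) (n : ℕ) (A B : Fin (n + 1) → ℝ)
    (q : Fin (n + 2) → ℝ) (hrep : IsPLRep h n A B q) : breakQ h ≤ (n : ℕ∞) :=
  sInf_le ⟨n, rfl, A, B, q, hrep⟩

/-- Lipschitz-constant preserving improvement of piecewise affine linear
approximations. -/
theorem stmt4 (f : ℝ → ℝ) (hf : ContinuousOn f (Set.Icc 0 1))
    (μ : Measure ℝ) [IsFiniteMeasure μ] :
    ∀ g : ℝ → ℝ, ContinuousOn g (Set.Icc 0 1) → breakQ g < ⊤ →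
      ∃ h : ℝ → ℝ, ContinuousOn h (Set.Icc 0 1) ∧ breakQ h < ⊤ ∧ breakQ h ≤ breakQ g ∧
        lipC h ≤ lipC f ∧
        (∫ y in Set.Icc (0:ℝ) 1, (h y - f y) ^ 2 ∂μ) ≤
          ∫ y in Set.Icc (0:ℝ) 1, (g y - f y) ^ 2 ∂μ := by
  intro g hg hQ
  by_cases hlip : lipC f = ⊤
  · exact ⟨g, hg, hQ, le_refl _, by rw [hlip]; exact le_top, le_refl _⟩
  · set L := (lipC f).toReal with hLdef
    have hL0 : 0 ≤ L := ENNReal.toReal_nonneg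
    have hflip : LipOn L f := lip_of_lipC f hlip
    have hex : ∃ n : ℕ, ∃ (A B : Fin (n + 1) → ℝ) (q : Fin (n + 2) → ℝ),
        IsPLRep g n A B q := by
      by_contra hcon
      push_neg at hcon
      have hS : {m : ℕ∞ | ∃ n : ℕ, m = (n : ℕ∞) ∧
          ∃ (A B : Fin (n + 1) → ℝ) (q : Fin (n + 2) → ℝ), IsPLRep g n A B q} = ∅ := by
        rw [Set.eq_empty_iff_forall_notMem]
        rintro m ⟨k, -, A, B, q, hrep⟩
        exact hcon k A B q hrep
      have : breakQ g = ⊤ := by unfold breakQ; rw [hS]; exact sInf_empty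
      rw [this] at hQ
      exact absurd hQ (lt_irrefl _)
    set n0 := Nat.find hex with hn0def
    have hrepmin := Nat.find_spec hex
    have hbq : breakQ g = (n0 : ℕ∞) := by
      apply le_antisymm
      · exact sInf_le ⟨n0, rfl, hrepmin⟩
      · refine le_sInf ?_
        rintro m ⟨k, rfl, hrep⟩
        exact_mod_cast Nat.find_min' hex hrep
    obtain ⟨A, B, q, hrep⟩ := hrepmin
    obtain ⟨s, hsrep, hscard⟩ := finrep_of_rep g n0 A B q hrep
    obtain ⟨h, s', hcont, hs'rep, hs'card, hbad, hpt⟩ :=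
      main_induction L hL0 f hflip hf (badPts L g s).card g hg s hsrep (le_refl _)
    obtain ⟨n', A', B', q', hrep', hcard'⟩ := rep_of_finrep h s' hs'rep
    have hn' : n' ≤ n0 := by omega
    have hQh : breakQ h ≤ (n' : ℕ∞) := breakQ_le_of_rep h n' A' B' q' hrep'
    have hQh2 : breakQ h ≤ breakQ g := by
      rw [hbq]
      exact le_trans hQh (by exact_mod_cast hn')
    have hQhfin : breakQ h < ⊤ := lt_of_le_of_lt hQh (Ne.lt_top (by simp : (n' : ℕ∞) ≠ ⊤))
    have hhlip : LipOn L h := lip_of_good L hL0 h s' hs'rep hbad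
    have hlipCh : lipC h ≤ lipC f := by
      refine le_trans (lipC_le_of_lip L h hhlip) ?_
      rw [hLdef]
      exact le_of_eq (ENNReal.ofReal_toReal hlip)
    have hint : (∫ y in Icc (0:ℝ) 1, (h y - f y) ^ 2 ∂μ) ≤
        ∫ y in Icc (0:ℝ) 1, (g y - f y) ^ 2 ∂μ := by
      refine setIntegral_mono_on ?_ ?_ measurableSet_Icc ?_
      · exact ((hcont.sub hf).pow 2).integrableOn_compact isCompact_Icc
      · exact ((hg.sub hf).pow 2).integrableOn_compact isCompact_Icc
      · intro x hx
        have hle := hpt x hx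
        have h1 : (h x - f x) ^ 2 = |h x - f x| ^ 2 := (sq_abs _).symm
        have h2 : (g x - f x) ^ 2 = |g x - f x| ^ 2 := (sq_abs _).symm
        rw [h1, h2]
        exact pow_le_pow_left₀ (abs_nonneg _) hle 2
    exact ⟨h, hcont, hQhfin, hQh2, hlipCh, hint⟩
end

section
/- Let 𝔡 ∈ ℕ, f ∈ C(ℝ^𝔡, ℝ), let 𝐌 : ℝ^𝔡 → [0, ∞] satisfy for all θ ∈ ℝ^𝔡 that 𝐌(θ) = inf({r ∈ ℝ : ∃ h ∈ (𝔻f)(θ): r = ‖h‖} ∪ {∞}), and let (θ_n)_{n ∈ ℕ₀} ⊆ ℝ^𝔡 satisfy limsup_{n → ∞} ‖θ_n − θ_0‖ = 0. Then liminf_{n → ∞} 𝐌(θ_n) ≥ 𝐌(θ_0). -/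
open Filter Topology
open scoped ENNReal

/-- `FrechetSubdiffAt f x y` says that `y` belongs to the Fréchet subdifferential `(𝒟f)(x)`,
i.e. `liminf_{h → 0} (f(x+h) − f(x) − ⟪y,h⟫)/‖h‖ ≥ 0`. -/
def FrechetSubdiffAt {d : ℕ} (f : EuclideanSpace ℝ (Fin d) → ℝ)
    (x y : EuclideanSpace ℝ (Fin d)) : Prop :=
  ∀ ε > (0:ℝ), ∀ᶠ v in 𝓝[≠] (0 : EuclideanSpace ℝ (Fin d)),
    -ε ≤ (f (x + v) - f x - (inner ℝ y v : ℝ)) / ‖v‖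

/-- The limiting Fréchet subdifferential
`(𝔻f)(x) = ⋂_{ε>0} closure (⋃_{y : ‖y−x‖<ε} (𝒟f)(y))`. -/
def limitingSubdiff {d : ℕ} (f : EuclideanSpace ℝ (Fin d) → ℝ)
    (x : EuclideanSpace ℝ (Fin d)) : Set (EuclideanSpace ℝ (Fin d)) :=
  ⋂ ε > (0:ℝ), closure {z | ∃ y, ‖y - x‖ < ε ∧ FrechetSubdiffAt f y z}

/-- Lower semicontinuity of the nonsmooth slope
`𝐌(θ) = inf {‖h‖ : h ∈ (𝔻f)(θ)}` (with `inf ∅ = ∞`). -/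
theorem stmt13 (d : ℕ) (f : EuclideanSpace ℝ (Fin d) → ℝ) (hf : Continuous f)
    (M : EuclideanSpace ℝ (Fin d) → ℝ≥0∞)
    (hM : ∀ θ, M θ = ⨅ (h : EuclideanSpace ℝ (Fin d)) (_ : h ∈ limitingSubdiff f θ),
      (‖h‖₊ : ℝ≥0∞))
    (θ : ℕ → EuclideanSpace ℝ (Fin d))
    (hθ : Tendsto (fun n => ‖θ n - θ 0‖) atTop (𝓝 0)) :
    M (θ 0) ≤ liminf (fun n => M (θ n)) atTop := by
  by_contra hcon
  push_neg at hcon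
  obtain ⟨c, hc1, hc2⟩ := exists_between hcon
  have hcne : c ≠ ⊤ := (hc2.trans_le le_top).ne
  have hfreq : ∃ᶠ n in atTop, M (θ n) < c :=
    frequently_lt_of_liminf_lt (by isBoundedDefault) hc1
  obtain ⟨φ, hφ, hφP⟩ := Filter.extraction_of_frequently_atTop hfreq
  have hchoice : ∀ n, ∃ h, h ∈ limitingSubdiff f (θ (φ n)) ∧ (‖h‖₊ : ℝ≥0∞) < c := by
    intro n
    have h1 := hφP n
    rw [hM] at h1
    simpa [iInf_lt_iff] using h1
  choose g hg hgc using hchoice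
  have hball : ∀ n, g n ∈ Metric.closedBall (0:EuclideanSpace ℝ (Fin d)) c.toReal := by
    intro n
    have h2 := ENNReal.toReal_mono hcne (hgc n).le
    simpa [Metric.mem_closedBall, dist_zero_right] using h2
  obtain ⟨hlim, hmem, ψ, hψ, hconv⟩ :=
    (isCompact_closedBall (0:EuclideanSpace ℝ (Fin d)) c.toReal).tendsto_subseq hball
  have hsub : hlim ∈ limitingSubdiff f (θ 0) := by
    rw [limitingSubdiff]
    simp only [Set.mem_iInter]
    intro ε hε
    refine isClosed_closure.mem_of_tendsto hconv ?_
    have hten : Tendsto (fun k => ‖θ (φ (ψ k)) - θ 0‖) atTop (𝓝 0) :=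
      hθ.comp ((hφ.comp hψ).tendsto_atTop)
    have hev : ∀ᶠ k in atTop, ‖θ (φ (ψ k)) - θ 0‖ < ε/2 := by
      have := hten.eventually_lt_const (by linarith : (0:ℝ) < ε/2)
      exact this
    filter_upwards [hev] with k hk
    have h3 := hg (ψ k)
    rw [limitingSubdiff] at h3
    simp only [Set.mem_iInter] at h3
    have h4 := h3 (ε/2) (by linarith)
    refine closure_mono ?_ h4
    rintro z ⟨y, hy, hyz⟩
    refine ⟨y, ?_, hyz⟩
    calc ‖y - θ 0‖ ≤ ‖y - θ (φ (ψ k))‖ + ‖θ (φ (ψ k)) - θ 0‖ := by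
          simpa using norm_sub_le_norm_sub_add_norm_sub y (θ (φ (ψ k))) (θ 0)
      _ < ε := by linarith
  have h1 : M (θ 0) ≤ (‖hlim‖₊ : ℝ≥0∞) := by
    rw [hM]; exact iInf₂_le _ hsub
  have h2 : (‖hlim‖₊ : ℝ≥0∞) ≤ c := by
    rw [← enorm_eq_nnnorm, ← ofReal_norm, ← ENNReal.ofReal_toReal hcne]
    exact ENNReal.ofReal_le_ofReal (by simpa [Metric.mem_closedBall, dist_zero_right] using hmem)
  exact absurd (h1.trans h2) (not_le.mpr hc2)
end

section
/- Let 𝔡 ∈ ℕ, 𝔠 ∈ ℝ, ε, L, C ∈ (0, ∞), α ∈ (0, 1), γ ∈ (0, L^{−1}], ϑ ∈ ℝ^𝔡, let B = {θ ∈ ℝ^𝔡 : ‖θ − ϑ‖ < ε}, let ℒ ∈ C(ℝ^𝔡, ℝ) satisfy ℒ|_B ∈ C¹(B, ℝ), let 𝒢 : ℝ^𝔡 → ℝ^𝔡 satisfy for all θ ∈ B that 𝒢(θ) = (∇ℒ)(θ), assume 𝒢(ϑ) = 0, assume for all θ_1, θ_2 ∈ B that ‖𝒢(θ_1) − 𝒢(θ_2)‖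 ≤ L‖θ_1 − θ_2‖, let Θ : ℕ₀ → ℝ^𝔡 satisfy for all n ∈ ℕ₀ that Θ_{n+1} = Θ_n − γ𝒢(Θ_n), assume for all θ ∈ B that |ℒ(θ) − ℒ(ϑ)|^α ≤ C‖𝒢(θ)‖, assume 𝔠 = |ℒ(Θ_0) − ℒ(ϑ)| and 2C(1 − α)^{−1} 𝔠^{1−α} + ‖Θ_0 − ϑ‖ < ε/(γL + 1), and assume inf_{n ∈ {m ∈ ℕ₀ : ∀ k ∈ ℕ₀ ∩ [0,m]: Θ_k ∈ B}} ℒ(Θ_n) ≥ ℒ(ϑ). Then there exists ψ ∈ ℝ^𝔡 with ℒ(ψ) = ℒ(ϑ) and 𝒢(ψ) = 0 such that (i) for all n ∈ ℕ₀: Θ_n ∈ B, (ii) for all n ∈ ℕ₀: 0 ≤ ℒ(Θ_n) − ℒ(ψ) ≤ 2C²𝔠² (1_{{0}}(𝔠) + 𝔠^{2α} nγ + 2C²𝔠)^{−1}, and (iii) for all n ∈ ℕ₀: ‖Θ_n − ψ‖ ≤ Σ_{k=n}^∞ ‖Θ_{k+1} − Θ_k‖ ≤ 2C(1 − α)^{−1}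 |ℒ(Θ_n) − ℒ(ψ)|^{1−α} ≤ 2^{2−α} C^{3−2α} 𝔠^{2−2α} (1 − α)^{−1} (1_{{0}}(𝔠) + 𝔠^{2α} nγ + 2C²𝔠)^{α−1}. -/
open MeasureTheory Filter Topology
set_option maxHeartbeats 1000000

section Aux
open InnerProductSpace intervalIntegral

lemma aux_descent {d : ℕ} {L γ : ℝ} (hγpos : 0 < γ) (hγL : γ * L ≤ 1) (hLpos : 0 ≤ L)
    {B : Set (EuclideanSpace ℝ (Fin d))} (hBo : IsOpen B) (hBc : Convex ℝ B)
    {ℒ : EuclideanSpace ℝ (Fin d) → ℝ} (hℒ1 : ContDiffOn ℝ 1 ℒ B)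
    {𝒢 : EuclideanSpace ℝ (Fin d) → EuclideanSpace ℝ (Fin d)}
    (h𝒢grad : ∀ θ ∈ B, 𝒢 θ = gradient ℒ θ)
    (h𝒢lip : ∀ θ₁ ∈ B, ∀ θ₂ ∈ B, ‖𝒢 θ₁ - 𝒢 θ₂‖ ≤ L * ‖θ₁ - θ₂‖)
    {x : EuclideanSpace ℝ (Fin d)} (hx : x ∈ B) (hy : x - γ • 𝒢 x ∈ B) :
    ℒ (x - γ • 𝒢 x) ≤ ℒ x - γ / 2 * ‖𝒢 x‖ ^ 2 := by
  set y := x - γ • 𝒢 x with hy_def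
  set v := y - x with hv_def
  set z : ℝ → EuclideanSpace ℝ (Fin d) := fun t => x + t • v with hz_def
  have hz0 : z 0 = x := by simp [hz_def]
  have hz1 : z 1 = y := by simp [hz_def, hv_def]
  have hseg : ∀ t ∈ Set.Icc (0:ℝ) 1, z t ∈ B := by
    intro t ht
    have : z t ∈ segment ℝ x y := by
      rw [segment_eq_image']
      exact ⟨t, ht, rfl⟩
    exact hBc.segment_subset hx hy this
  have hgrad : ∀ w ∈ B, HasGradientAt ℒ (𝒢 w) w := by
    intro w hw
    have hdiff : DifferentiableAt ℝ ℒ w :=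
      (hℒ1.contDiffAt (hBo.mem_nhds hw)).differentiableAt one_ne_zero
    rw [h𝒢grad w hw]
    exact hdiff.hasGradientAt
  have hderiv : ∀ t ∈ Set.Icc (0:ℝ) 1,
      HasDerivAt (fun s => ℒ (z s)) (⟪𝒢 (z t), v⟫_ℝ) t := by
    intro t ht
    have h1 : HasDerivAt z v t := by
      simpa [hz_def] using ((hasDerivAt_id t).smul_const v).const_add x
    have h2 := (hgrad _ (hseg t ht)).hasFDerivAt
    have h3 := h2.comp_hasDerivAt t h1
    simp only [InnerProductSpace.toDual_apply_apply] at h3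
    exact h3
  have hcontG : ContinuousOn 𝒢 B := by
    have : LipschitzOnWith L.toNNReal 𝒢 B := by
      apply LipschitzOnWith.of_dist_le_mul
      intro a ha b hb
      simpa [dist_eq_norm, Real.coe_toNNReal L hLpos] using h𝒢lip a ha b hb
    exact this.continuousOn
  have hzc : Continuous z := by
    exact continuous_const.add (continuous_id.smul continuous_const)
  have hcont : ContinuousOn (fun t => ⟪𝒢 (z t), v⟫_ℝ) (Set.Icc (0:ℝ) 1) := by
    exact ((hcontG.comp hzc.continuousOn hseg).inner continuousOn_const)
  have hint : IntervalIntegrable (fun t => ⟪𝒢 (z t), v⟫_ℝ) MeasureTheory.volume 0 1 := by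
    apply ContinuousOn.intervalIntegrable
    rwa [Set.uIcc_of_le zero_le_one]
  have hFTC : ∫ t in (0:ℝ)..1, ⟪𝒢 (z t), v⟫_ℝ = ℒ y - ℒ x := by
    rw [← hz0, ← hz1]
    exact integral_eq_sub_of_hasDerivAt (fun t ht => hderiv t (by rwa [Set.uIcc_of_le zero_le_one] at ht)) hint
  have hint2 : IntervalIntegrable (fun t => ⟪𝒢 x, v⟫_ℝ + L * ‖v‖ ^ 2 * t) MeasureTheory.volume 0 1 := by
    exact (continuous_const.add (continuous_const.mul continuous_id)).intervalIntegrable _ _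
  have hmono : ∫ t in (0:ℝ)..1, ⟪𝒢 (z t), v⟫_ℝ
      ≤ ∫ t in (0:ℝ)..1, (⟪𝒢 x, v⟫_ℝ + L * ‖v‖ ^ 2 * t) := by
    apply integral_mono_on zero_le_one hint hint2
    intro t ht
    have h1 : ⟪𝒢 (z t), v⟫_ℝ = ⟪𝒢 x, v⟫_ℝ + ⟪𝒢 (z t) - 𝒢 x, v⟫_ℝ := by
      rw [inner_sub_left]; ring
    rw [h1]
    have h2 : ⟪𝒢 (z t) - 𝒢 x, v⟫_ℝ ≤ ‖𝒢 (z t) - 𝒢 x‖ * ‖v‖ := real_inner_le_norm _ _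
    have h3 : ‖𝒢 (z t) - 𝒢 x‖ ≤ L * (t * ‖v‖) := by
      have := h𝒢lip _ (hseg t ht) x hx
      have hzx : ‖z t - x‖ = t * ‖v‖ := by
        simp [hz_def, norm_smul, abs_of_nonneg ht.1]
      rwa [hzx] at this
    have h4 : ⟪𝒢 (z t) - 𝒢 x, v⟫_ℝ ≤ L * ‖v‖ ^ 2 * t := by
      calc ⟪𝒢 (z t) - 𝒢 x, v⟫_ℝ ≤ ‖𝒢 (z t) - 𝒢 x‖ * ‖v‖ := h2
        _ ≤ L * (t * ‖v‖) * ‖v‖ := by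
            apply mul_le_mul_of_nonneg_right h3 (norm_nonneg _)
        _ = L * ‖v‖ ^ 2 * t := by ring
    linarith
  have hint3 : IntervalIntegrable (fun t : ℝ => L * ‖v‖ ^ 2 * t) MeasureTheory.volume 0 1 :=
    (continuous_const.mul continuous_id).intervalIntegrable _ _
  have hval : ∫ t in (0:ℝ)..1, (⟪𝒢 x, v⟫_ℝ + L * ‖v‖ ^ 2 * t)
      = ⟪𝒢 x, v⟫_ℝ + L * ‖v‖ ^ 2 / 2 := by
    rw [integral_add intervalIntegrable_const hint3, intervalIntegral.integral_const_mul, integral_id]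
    simp only [intervalIntegral.integral_const, smul_eq_mul]
    ring
  have hkey : ℒ y - ℒ x ≤ ⟪𝒢 x, v⟫_ℝ + L * ‖v‖ ^ 2 / 2 := by
    rw [← hFTC, ← hval]; exact hmono
  have hinner : ⟪𝒢 x, v⟫_ℝ = -(γ * ‖𝒢 x‖ ^ 2) := by
    have : v = -(γ • 𝒢 x) := by rw [hv_def, hy_def]; abel
    rw [this, inner_neg_right, real_inner_smul_right, real_inner_self_eq_norm_sq]
  have hnv : ‖v‖ ^ 2 = γ ^ 2 * ‖𝒢 x‖ ^ 2 := by
    have : v = -(γ • 𝒢 x) := by rw [hv_def, hy_def]; abel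
    rw [this, norm_neg, norm_smul, Real.norm_eq_abs, mul_pow, sq_abs]
  rw [hinner, hnv] at hkey
  have hg2 : 0 ≤ ‖𝒢 x‖ ^ 2 := sq_nonneg _
  nlinarith [mul_nonneg (le_of_lt hγpos) hg2]


lemma aux_young {a b α : ℝ} (ha : 0 < a) (hb : 0 ≤ b) (h0 : 0 < α) (h1 : α < 1) :
    b ^ (1 - α) ≤ a ^ (-α) * (α * a + (1 - α) * b) := by
  have hy := Real.geom_mean_le_arith_mean2_weighted h0.le (by linarith : (0:ℝ) ≤ 1 - α)
    ha.le hb (by ring)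
  have hpow : a ^ (-α) * (a ^ α * b ^ (1 - α)) = b ^ (1 - α) := by
    rw [← mul_assoc, ← Real.rpow_add ha]
    simp
  calc b ^ (1 - α) = a ^ (-α) * (a ^ α * b ^ (1 - α)) := hpow.symm
    _ ≤ a ^ (-α) * (α * a + (1 - α) * b) :=
        mul_le_mul_of_nonneg_left hy (Real.rpow_nonneg ha.le _)

lemma aux_rate {c κ : ℝ} (hc : 0 < c) (hκ : 0 < κ) (e : ℕ → ℝ)
    (h0 : e 0 = c) (hpos : ∀ n, 0 ≤ e n)
    (hrec : ∀ n, e (n + 1) ≤ e n - κ * e n ^ 2) :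
    ∀ n : ℕ, e n * (1 + κ * c * n) ≤ c := by
  intro n
  induction n with
  | zero => simp [h0]
  | succ n ih =>
    set x := e n with hx
    have hxpos : 0 ≤ x := hpos n
    have hA : (0:ℝ) < 1 + κ * c * n := by positivity
    have hIH : x * (1 + κ * c * n) ≤ c := ih
    have hrecn := hrec n
    have hnext : 0 ≤ e (n + 1) := hpos (n + 1)
    rcases eq_or_lt_of_le hxpos with h | h
    · -- x = 0
      have hz : e (n + 1) ≤ 0 := by nlinarith
      have : e (n+1) * (1 + κ * c * (n+1)) ≤ 0 := by
        apply mul_nonpos_of_nonpos_of_nonneg hz (by positivity)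
      push_cast
      nlinarith
    · -- x > 0
      have hκx : κ * x ≤ 1 := by nlinarith
      have hcx : 0 ≤ c - x * (1 + κ * c * n) := by linarith
      have key : (x - κ * x ^ 2) * (1 + κ * c * (n + 1)) ≤ c := by
        nlinarith [mul_nonneg hcx (by linarith : (0:ℝ) ≤ 1 - κ * x),
          mul_nonneg (mul_nonneg hκ.le hc.le) (sq_nonneg x), sq_nonneg x,
          mul_nonneg (mul_nonneg (mul_nonneg hκ.le hκ.le) hc.le) (mul_nonneg (sq_nonneg x) (Nat.cast_nonneg n))]
      have hmul : e (n+1) * (1 + κ * c * (n+1)) ≤ (x - κ * x ^ 2) * (1 + κ * c * (n+1)) := by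
        apply mul_le_mul_of_nonneg_right hrecn (by positivity)
      push_cast at key hmul ⊢
      linarith

end Aux

/-- Local convergence of gradient descent under a Kurdyka–Łojasiewicz
inequality. -/
theorem stmt18 (𝔡 : ℕ) (𝔠 ε L C α γ : ℝ)
    (hε : 0 < ε) (hL : 0 < L) (hC : 0 < C) (hα : α ∈ Set.Ioo (0:ℝ) 1)
    (hγ : γ ∈ Set.Ioc (0:ℝ) L⁻¹)
    (ϑ : EuclideanSpace ℝ (Fin 𝔡)) (B : Set (EuclideanSpace ℝ (Fin 𝔡)))
    (hB : B = {θ : EuclideanSpace ℝ (Fin 𝔡) | ‖θ - ϑ‖ < ε})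
    (ℒ : EuclideanSpace ℝ (Fin 𝔡) → ℝ) (hℒc : Continuous ℒ) (hℒ1 : ContDiffOn ℝ 1 ℒ B)
    (𝒢 : EuclideanSpace ℝ (Fin 𝔡) → EuclideanSpace ℝ (Fin 𝔡))
    (h𝒢grad : ∀ θ ∈ B, 𝒢 θ = gradient ℒ θ) (h𝒢ϑ : 𝒢 ϑ = 0)
    (h𝒢lip : ∀ θ₁ ∈ B, ∀ θ₂ ∈ B, ‖𝒢 θ₁ - 𝒢 θ₂‖ ≤ L * ‖θ₁ - θ₂‖)
    (Θ : ℕ → EuclideanSpace ℝ (Fin 𝔡)) (hΘ : ∀ n, Θ (n + 1) = Θ n - γ • 𝒢 (Θ n))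
    (hKL : ∀ θ ∈ B, |ℒ θ - ℒ ϑ| ^ α ≤ C * ‖𝒢 θ‖)
    (h𝔠 : 𝔠 = |ℒ (Θ 0) - ℒ ϑ|)
    (hsize : 2 * C * (1 - α)⁻¹ * 𝔠 ^ (1 - α) + ‖Θ 0 - ϑ‖ < ε / (γ * L + 1))
    (hinf : ∀ n : ℕ, (∀ k ≤ n, Θ k ∈ B) → ℒ ϑ ≤ ℒ (Θ n)) :
    ∃ ψ : EuclideanSpace ℝ (Fin 𝔡), ℒ ψ = ℒ ϑ ∧ 𝒢 ψ = 0 ∧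
      (∀ n : ℕ, Θ n ∈ B) ∧
      (∀ n : ℕ, 0 ≤ ℒ (Θ n) - ℒ ψ ∧
        ℒ (Θ n) - ℒ ψ ≤ 2 * C ^ 2 * 𝔠 ^ 2 /
          ((if 𝔠 = 0 then (1:ℝ) else 0) + 𝔠 ^ (2 * α) * n * γ + 2 * C ^ 2 * 𝔠)) ∧
      (∀ n : ℕ, Summable (fun k : ℕ => ‖Θ (k + 1) - Θ k‖) ∧
        ‖Θ n - ψ‖ ≤ ∑' k : ℕ, ‖Θ (n + k + 1) - Θ (n + k)‖ ∧
        (∑' k : ℕ, ‖Θ (n + k + 1) - Θ (n + k)‖) ≤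
          2 * C * (1 - α)⁻¹ * |ℒ (Θ n) - ℒ ψ| ^ (1 - α) ∧
        2 * C * (1 - α)⁻¹ * |ℒ (Θ n) - ℒ ψ| ^ (1 - α) ≤
          (2:ℝ) ^ (2 - α) * C ^ (3 - 2 * α) * 𝔠 ^ (2 - 2 * α) * (1 - α)⁻¹ *
            ((if 𝔠 = 0 then (1:ℝ) else 0) + 𝔠 ^ (2 * α) * n * γ + 2 * C ^ 2 * 𝔠) ^ (α - 1)) := by
  obtain ⟨hγpos, hγle⟩ := hγ
  obtain ⟨hα0, hα1⟩ := hα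
  have h1α : 0 < 1 - α := by linarith
  have hγL : γ * L ≤ 1 := by
    have := mul_le_mul_of_nonneg_right hγle hL.le
    rwa [inv_mul_cancel₀ hL.ne'] at this
  have hγL1 : (0:ℝ) < γ * L + 1 := by positivity
  -- B is an open ball
  have hBball : B = Metric.ball ϑ ε := by
    rw [hB]; ext w; simp [Metric.mem_ball, dist_eq_norm]
  have hBo : IsOpen B := by rw [hBball]; exact Metric.isOpen_ball
  have hBc : Convex ℝ B := by rw [hBball]; exact convex_ball ϑ ε
  have hmemB : ∀ w : EuclideanSpace ℝ (Fin 𝔡), ‖w - ϑ‖ < ε → w ∈ B := by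
    intro w hw; rw [hB]; exact hw
  have hϑB : ϑ ∈ B := by apply hmemB; simpa using hε
  set e : ℕ → ℝ := fun n => ℒ (Θ n) - ℒ ϑ with he_def
  clear_value e
  set D : ℝ := 2 * C * (1 - α)⁻¹ with hD_def
  clear_value D
  have hD : 0 < D := by rw [hD_def]; positivity
  set S : ℕ → ℝ := fun n => ∑ k ∈ Finset.range n, ‖Θ (k + 1) - Θ k‖ with hS_def
  clear_value S
  have hstepnorm : ∀ n, ‖Θ (n + 1) - Θ n‖ = γ * ‖𝒢 (Θ n)‖ := by
    intro n
    rw [hΘ n]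
    rw [sub_sub_cancel_left, norm_neg, norm_smul, Real.norm_eq_abs, abs_of_pos hγpos]
  have htel : ∀ n, ‖Θ n - ϑ‖ ≤ ‖Θ 0 - ϑ‖ + S n := by
    intro n
    induction n with
    | zero => simp [hS_def]
    | succ n ih =>
      have h1 : ‖Θ (n+1) - ϑ‖ ≤ ‖Θ (n+1) - Θ n‖ + ‖Θ n - ϑ‖ := norm_sub_le_norm_sub_add_norm_sub _ _ _
      have h2 : S (n+1) = S n + ‖Θ (n+1) - Θ n‖ := by rw [hS_def]; exact Finset.sum_range_succ _ _
      rw [h2]; linarith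
  -- descent inequality when both points in B
  have hdesc : ∀ n, Θ n ∈ B → Θ (n+1) ∈ B → e (n+1) ≤ e n - γ / 2 * ‖𝒢 (Θ n)‖ ^ 2 := by
    intro n h1 h2
    have h2' : Θ n - γ • 𝒢 (Θ n) ∈ B := by rwa [hΘ n] at h2
    have := aux_descent hγpos hγL hL.le hBo hBc hℒ1 h𝒢grad h𝒢lip h1 h2'
    rw [← hΘ n] at this
    simp only [he_def]
    linarith
  -- Main one-step KL estimate
  have key : ∀ n, Θ n ∈ B → Θ (n+1) ∈ B → 0 ≤ e n → 0 ≤ e (n+1) →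
      ‖Θ (n+1) - Θ n‖ + D * e (n+1) ^ (1 - α) ≤ D * e n ^ (1 - α) := by
    intro n h1 h2 hen hen1
    have hde := hdesc n h1 h2
    set g := 𝒢 (Θ n) with hg_def
    clear_value g
    rw [hstepnorm n, ← hg_def]
    by_cases hg0 : g = 0
    · rw [hg0]
      simp only [norm_zero, mul_zero, zero_add]
      have : e (n+1) ≤ e n := by
        have : (0:ℝ) ≤ γ / 2 * ‖g‖ ^ 2 := by positivity
        linarith
      exact mul_le_mul_of_nonneg_left (Real.rpow_le_rpow hen1 this h1α.le) hD.le
    · have hgpos : 0 < ‖g‖ := norm_pos_iff.2 hg0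
      have hepos : 0 < e n := by
        rcases eq_or_lt_of_le hen with h | h
        · exfalso
          have : (0:ℝ) < γ / 2 * ‖g‖ ^ 2 := by positivity
          nlinarith
        · exact h
      have hKLn : e n ^ α ≤ C * ‖g‖ := by
        have h' := hKL (Θ n) h1
        have h'' : ℒ (Θ n) - ℒ ϑ = e n := by rw [he_def]
        rw [← hg_def, h'', abs_of_nonneg hen] at h'
        exact h'
      have hyoung := aux_young hepos hen1 hα0 hα1
      set P : ℝ := e n ^ (-α) with hP_def
      clear_value P
      have hPpos : 0 < P := by rw [hP_def]; exact Real.rpow_pos_of_pos hepos _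
      have hP1 : e n ^ (1 - α) = P * e n := by
        rw [hP_def, show (1 - α) = -α + 1 by ring, Real.rpow_add hepos, Real.rpow_one]
      have hPinv : (C * ‖g‖)⁻¹ ≤ P := by
        rw [hP_def, Real.rpow_neg hepos.le]
        apply inv_anti₀ (Real.rpow_pos_of_pos hepos _) hKLn
      -- diff ≥ P * (1-α) * (e n - e (n+1))
      have hd1 : P * ((1 - α) * (e n - e (n+1))) ≤ e n ^ (1-α) - e (n+1) ^ (1-α) := by
        rw [hP1]
        nlinarith [hyoung, hPpos]
      have hd2 : (1 - α) * (γ / 2 * ‖g‖^2) ≤ (1 - α) * (e n - e (n+1)) := by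
        apply mul_le_mul_of_nonneg_left _ h1α.le
        linarith
      have hd3 : (C * ‖g‖)⁻¹ * ((1 - α) * (γ / 2 * ‖g‖^2)) ≤ P * ((1 - α) * (e n - e (n+1))) := by
        calc (C * ‖g‖)⁻¹ * ((1 - α) * (γ / 2 * ‖g‖^2))
            ≤ P * ((1 - α) * (γ / 2 * ‖g‖^2)) := by
              apply mul_le_mul_of_nonneg_right hPinv (by positivity)
          _ ≤ P * ((1 - α) * (e n - e (n+1))) := by
              apply mul_le_mul_of_nonneg_left hd2 hPpos.le
      have hd4 : (C * ‖g‖)⁻¹ * ((1 - α) * (γ / 2 * ‖g‖^2)) = (1 - α) * γ * ‖g‖ / (2 * C) := by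
        field_simp
      have hd5 : (1 - α) * γ * ‖g‖ / (2 * C) ≤ e n ^ (1-α) - e (n+1) ^ (1-α) := by
        rw [← hd4]; linarith
      have hd6 := mul_le_mul_of_nonneg_left hd5 hD.le
      have hd7 : D * ((1 - α) * γ * ‖g‖ / (2 * C)) = γ * ‖g‖ := by
        rw [hD_def]
        field_simp
      rw [hd7, mul_sub] at hd6
      linarith
  have hconv : ε / (γ * L + 1) ≤ ε := by
    apply div_le_self hε.le
    nlinarith [mul_pos hγpos hL]
  have h𝔠nn : 0 ≤ 𝔠 := by rw [h𝔠]; exact abs_nonneg _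
  have hD𝔠 : 0 ≤ D * 𝔠 ^ (1 - α) := mul_nonneg hD.le (Real.rpow_nonneg h𝔠nn _)
  have hΘ0B : Θ 0 ∈ B := by
    apply hmemB
    linarith
  have he00' : 0 ≤ ℒ (Θ 0) - ℒ ϑ := by
    have := hinf 0 (fun k hk => by rw [Nat.le_zero.mp hk]; exact hΘ0B)
    linarith
  have he0 : e 0 = 𝔠 := by
    simp only [he_def, h𝔠]
    exact (abs_of_nonneg he00').symm
  -- Grand induction
  have habs : ∀ n, (∀ k ≤ n, Θ k ∈ B) ∧ S n + D * e n ^ (1 - α) ≤ D * 𝔠 ^ (1 - α) := by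
    intro n
    induction n with
    | zero =>
      refine ⟨fun k hk => by rw [Nat.le_zero.mp hk]; exact hΘ0B, ?_⟩
      have hS0 : S 0 = 0 := by rw [hS_def]; simp
      rw [hS0, he0]
      linarith
    | succ n ih =>
      obtain ⟨hmem, hsum⟩ := ih
      have hΘnB := hmem n le_rfl
      have henn : 0 ≤ e n := by
        have := hinf n (fun j hj => hmem j hj)
        simp only [he_def]; linarith
      have hrnn : 0 ≤ D * e n ^ (1 - α) := mul_nonneg hD.le (Real.rpow_nonneg henn _)
      have hnormn : ‖Θ n - ϑ‖ < ε / (γ * L + 1) := by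
        have h1 := htel n
        calc ‖Θ n - ϑ‖ ≤ ‖Θ 0 - ϑ‖ + S n := h1
          _ ≤ ‖Θ 0 - ϑ‖ + D * 𝔠 ^ (1 - α) := by linarith
          _ < ε / (γ * L + 1) := by linarith
      have hGn : ‖𝒢 (Θ n)‖ ≤ L * ‖Θ n - ϑ‖ := by
        have := h𝒢lip (Θ n) hΘnB ϑ hϑB
        rwa [h𝒢ϑ, sub_zero] at this
      have hΘn1B : Θ (n + 1) ∈ B := by
        apply hmemB
        have h3 : ‖Θ (n+1) - ϑ‖ ≤ ‖Θ (n+1) - Θ n‖ + ‖Θ n - ϑ‖ :=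
          norm_sub_le_norm_sub_add_norm_sub _ _ _
        have h4 := hstepnorm n
        have h5 : ‖Θ (n+1) - ϑ‖ ≤ (γ * L + 1) * ‖Θ n - ϑ‖ := by
          rw [h4] at h3
          have hmul := mul_le_mul_of_nonneg_left hGn hγpos.le
          linarith
        have h6 : (γ * L + 1) * ‖Θ n - ϑ‖ < (γ * L + 1) * (ε / (γ * L + 1)) :=
          mul_lt_mul_of_pos_left hnormn hγL1
        have h7 : (γ * L + 1) * (ε / (γ * L + 1)) = ε := by field_simp
        linarith
      have hmem' : ∀ k ≤ n + 1, Θ k ∈ B := by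
        intro k hk
        rcases Nat.lt_or_ge k (n+1) with h | h
        · exact hmem k (Nat.lt_succ_iff.mp h)
        · have hkk : k = n + 1 := le_antisymm hk h
          rw [hkk]; exact hΘn1B
      have hen1 : 0 ≤ e (n+1) := by
        have := hinf (n+1) hmem'
        simp only [he_def]; linarith
      have hk := key n hΘnB hΘn1B henn hen1
      refine ⟨hmem', ?_⟩
      have hSsucc : S (n+1) = S n + ‖Θ (n+1) - Θ n‖ := by
        rw [hS_def]; exact Finset.sum_range_succ _ _
      linarith
  -- global facts
  have hmemAll : ∀ n, Θ n ∈ B := fun n => (habs n).1 n le_rfl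
  have heAll : ∀ n, 0 ≤ e n := by
    intro n
    have := hinf n fun k _ => hmemAll k
    simp only [he_def]; linarith
  have hSb : ∀ n, S n ≤ D * 𝔠 ^ (1 - α) := by
    intro n
    have h := (habs n).2
    have h2 : 0 ≤ D * e n ^ (1 - α) := mul_nonneg hD.le (Real.rpow_nonneg (heAll n) _)
    linarith
  have hkeyAll : ∀ n, ‖Θ (n+1) - Θ n‖ + D * e (n+1) ^ (1 - α) ≤ D * e n ^ (1 - α) :=
    fun n => key n (hmemAll n) (hmemAll (n+1)) (heAll n) (heAll (n+1))
  have hdescAll : ∀ n, e (n+1) ≤ e n - γ / 2 * ‖𝒢 (Θ n)‖ ^ 2 :=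
    fun n => hdesc n (hmemAll n) (hmemAll (n+1))
  have hmono : ∀ n, e (n+1) ≤ e n := by
    intro n
    have h := hdescAll n
    have h2 : (0:ℝ) ≤ γ / 2 * ‖𝒢 (Θ n)‖ ^ 2 := by positivity
    linarith
  have hanti : Antitone e := antitone_nat_of_succ_le hmono
  have heb : ∀ n, e n ≤ 𝔠 := fun n => by rw [← he0]; exact hanti (Nat.zero_le n)
  have hKLe : ∀ n, e n ^ α ≤ C * ‖𝒢 (Θ n)‖ := by
    intro n
    have h' := hKL (Θ n) (hmemAll n)
    have h'' : ℒ (Θ n) - ℒ ϑ = e n := by rw [he_def]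
    rwa [h'', abs_of_nonneg (heAll n)] at h'
  -- tail sums
  have htail : ∀ n m, (∑ k ∈ Finset.range m, ‖Θ (n + k + 1) - Θ (n + k)‖)
      ≤ D * e n ^ (1 - α) - D * e (n + m) ^ (1 - α) := by
    intro n m
    induction m with
    | zero => simp
    | succ m ih =>
      rw [Finset.sum_range_succ]
      have h := hkeyAll (n + m)
      have hidx : n + (m + 1) = n + m + 1 := by omega
      rw [hidx]
      linarith
  have htail' : ∀ n m, (∑ k ∈ Finset.range m, ‖Θ (n + k + 1) - Θ (n + k)‖)
      ≤ D * e n ^ (1 - α) := by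
    intro n m
    have h1 := htail n m
    have h2 : 0 ≤ D * e (n + m) ^ (1 - α) := mul_nonneg hD.le (Real.rpow_nonneg (heAll _) _)
    linarith
  have hsummable : Summable (fun k : ℕ => ‖Θ (k + 1) - Θ k‖) := by
    apply summable_of_sum_range_le (fun k => norm_nonneg _)
    intro m
    have := htail' 0 m
    simpa using this
  have hcauchy : CauchySeq Θ := by
    apply cauchySeq_of_summable_dist
    have hfe : (fun n => dist (Θ n) (Θ (n+1))) = fun n => ‖Θ (n+1) - Θ n‖ := by
      funext n; rw [dist_eq_norm, norm_sub_rev]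
    rw [hfe]; exact hsummable
  obtain ⟨ψ, hψ⟩ := cauchySeq_tendsto_of_complete hcauchy
  have hdistψ : ∀ n, ‖Θ n - ψ‖ ≤ ∑' k : ℕ, ‖Θ (n + k + 1) - Θ (n + k)‖ := by
    intro n
    have h := dist_le_tsum_of_dist_le_of_tendsto (fun k => ‖Θ (k+1) - Θ k‖)
      (fun k => by rw [dist_eq_norm, norm_sub_rev]) hsummable hψ n
    rwa [dist_eq_norm] at h
  have htsum_le : ∀ n, (∑' k : ℕ, ‖Θ (n + k + 1) - Θ (n + k)‖) ≤ D * e n ^ (1 - α) := by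
    intro n
    apply Real.tsum_le_of_sum_range_le (fun k => norm_nonneg _)
    intro m; exact htail' n m
  -- positivity of denominator
  have hQpos' : ∀ (hpos : 0 < 𝔠) (n : ℕ), 0 < 𝔠 ^ (2*α) * (n:ℝ) * γ + 2 * C ^ 2 * 𝔠 := by
    intro hpos n
    have h1 : 0 ≤ 𝔠 ^ (2*α) * (n:ℝ) * γ :=
      mul_nonneg (mul_nonneg (Real.rpow_nonneg h𝔠nn _) (Nat.cast_nonneg n)) hγpos.le
    have h2 : 0 < 2 * C ^ 2 * 𝔠 := mul_pos (by positivity) hpos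
    linarith
  -- the quantitative rate
  have hrate : ∀ n : ℕ, e n ≤ 2 * C ^ 2 * 𝔠 ^ 2 /
      ((if 𝔠 = 0 then (1:ℝ) else 0) + 𝔠 ^ (2 * α) * n * γ + 2 * C ^ 2 * 𝔠) := by
    rcases eq_or_lt_of_le h𝔠nn with h0 | hpos
    · intro n
      have hz : e n = 0 := le_antisymm (by rw [h0]; exact heb n) (heAll n)
      rw [hz, ← h0]
      simp
    · set κ : ℝ := γ * 𝔠 ^ (2*α - 2) / (2 * C ^ 2) with hκ_def
      clear_value κ
      have hκpos : 0 < κ := by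
        rw [hκ_def]
        exact div_pos (mul_pos hγpos (Real.rpow_pos_of_pos hpos _)) (by positivity)
      have hcc : 𝔠 ^ (2*α - 2) * 𝔠 ^ (2 - 2*α) = 1 := by
        rw [← Real.rpow_add hpos]; norm_num
      have hrecκ : ∀ n, e (n+1) ≤ e n - κ * e n ^ 2 := by
        intro n
        have h1 := hKLe n
        have h2 : e n ^ (2*α) ≤ C ^ 2 * ‖𝒢 (Θ n)‖ ^ 2 := by
          have h2a : (e n ^ α) ^ (2:ℕ) ≤ (C * ‖𝒢 (Θ n)‖) ^ (2:ℕ) :=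
            pow_le_pow_left₀ (Real.rpow_nonneg (heAll n) _) h1 2
          have h2b : e n ^ (2*α) = (e n ^ α) ^ (2:ℕ) := by
            rw [← Real.rpow_natCast (e n ^ α) 2, ← Real.rpow_mul (heAll n)]
            norm_num [mul_comm]
          rw [h2b]
          calc (e n ^ α) ^ (2:ℕ) ≤ (C * ‖𝒢 (Θ n)‖) ^ (2:ℕ) := h2a
            _ = C ^ 2 * ‖𝒢 (Θ n)‖ ^ 2 := by ring
        have h3 : e n ^ (2:ℕ) ≤ 𝔠 ^ (2 - 2*α) * e n ^ (2*α) := by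
          rcases eq_or_lt_of_le (heAll n) with hz | hz
          · rw [← hz]
            rw [Real.zero_rpow (by nlinarith : 2*α ≠ 0)]
            norm_num
          · have ha : e n ^ ((2:ℝ) - 2*α) ≤ 𝔠 ^ ((2:ℝ) - 2*α) :=
              Real.rpow_le_rpow (heAll n) (heb n) (by linarith)
            have hb : e n ^ (2:ℕ) = e n ^ ((2:ℝ) - 2*α) * e n ^ (2*α) := by
              rw [← Real.rpow_natCast (e n) 2, ← Real.rpow_add hz]
              norm_num
            rw [hb]
            exact mul_le_mul_of_nonneg_right ha (Real.rpow_nonneg (heAll n) _)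
        have h4 : κ * e n ^ 2 ≤ γ / 2 * ‖𝒢 (Θ n)‖ ^ 2 := by
          calc κ * e n ^ 2 ≤ κ * (𝔠 ^ (2 - 2*α) * e n ^ (2*α)) :=
                mul_le_mul_of_nonneg_left h3 hκpos.le
            _ = γ / (2 * C ^ 2) * (𝔠 ^ (2*α - 2) * 𝔠 ^ (2 - 2*α)) * e n ^ (2*α) := by
                rw [hκ_def]; ring
            _ = γ / (2 * C ^ 2) * e n ^ (2*α) := by rw [hcc]; ring
            _ ≤ γ / (2 * C ^ 2) * (C ^ 2 * ‖𝒢 (Θ n)‖ ^ 2) := by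
                apply mul_le_mul_of_nonneg_left h2
                exact div_nonneg hγpos.le (by positivity)
            _ = γ / 2 * ‖𝒢 (Θ n)‖ ^ 2 := by
                field_simp
        linarith [hdescAll n]
      have hrr := aux_rate hpos hκpos e he0 heAll hrecκ
      intro n
      have h1 := hrr n
      rw [if_neg hpos.ne']
      have hQp := hQpos' hpos n
      rw [le_div_iff₀ (by linarith)]
      have hident : 2 * C ^ 2 * 𝔠 ^ 2 * κ = γ * 𝔠 ^ (2*α) := by
        have h𝔠2 : (𝔠:ℝ) ^ (2:ℕ) * 𝔠 ^ (2*α - 2) = 𝔠 ^ (2*α) := by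
          rw [← Real.rpow_natCast 𝔠 2, ← Real.rpow_add hpos]
          norm_num
        rw [hκ_def]
        calc 2 * C ^ 2 * 𝔠 ^ 2 * (γ * 𝔠 ^ (2*α - 2) / (2 * C ^ 2))
            = γ * ((𝔠:ℝ) ^ (2:ℕ) * 𝔠 ^ (2*α - 2)) * (2 * C ^ 2 / (2 * C ^ 2)) := by ring
          _ = γ * 𝔠 ^ (2*α) := by
              rw [div_self (by positivity : (2*C^2:ℝ) ≠ 0), h𝔠2]; ring
      calc e n * (0 + 𝔠 ^ (2*α) * n * γ + 2 * C ^ 2 * 𝔠)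
          = (2 * C ^ 2 * 𝔠) * (e n * (1 + κ * 𝔠 * n))
            + e n * n * (γ * 𝔠 ^ (2*α) - 2 * C ^ 2 * 𝔠 ^ 2 * κ) := by ring
        _ = (2 * C ^ 2 * 𝔠) * (e n * (1 + κ * 𝔠 * n)) := by rw [hident]; ring
        _ ≤ (2 * C ^ 2 * 𝔠) * 𝔠 := by
            apply mul_le_mul_of_nonneg_left h1
            positivity
        _ = 2 * C ^ 2 * 𝔠 ^ 2 := by ring
  -- limit of e is 0
  have heQ : Tendsto e atTop (𝓝 0) := by
    rcases eq_or_lt_of_le h𝔠nn with h0 | hpos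
    · have hz : e = fun _ => (0:ℝ) := by
        funext n
        exact le_antisymm (by rw [h0]; exact heb n) (heAll n)
      rw [hz]; exact tendsto_const_nhds
    · apply squeeze_zero heAll hrate
      have hBpos : 0 < 𝔠 ^ (2*α) * γ := mul_pos (Real.rpow_pos_of_pos hpos _) hγpos
      have hd1 : Tendsto (fun n : ℕ => 𝔠 ^ (2*α) * γ * (n:ℝ)) atTop atTop :=
        (tendsto_natCast_atTop_atTop).const_mul_atTop hBpos
      have hd2 : Tendsto (fun n : ℕ =>
          (if 𝔠 = 0 then (1:ℝ) else 0) + 𝔠 ^ (2*α) * n * γ + 2 * C ^ 2 * 𝔠) atTop atTop := by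
        have hfe : (fun n : ℕ => (if 𝔠 = 0 then (1:ℝ) else 0) + 𝔠 ^ (2*α) * n * γ + 2 * C ^ 2 * 𝔠)
            = fun n : ℕ => 𝔠 ^ (2*α) * γ * (n:ℝ) + ((if 𝔠 = 0 then (1:ℝ) else 0) + 2 * C ^ 2 * 𝔠) := by
          funext n; ring
        rw [hfe]
        exact tendsto_atTop_add_const_right _ _ hd1
      exact Tendsto.div_atTop tendsto_const_nhds hd2
  have hLψ : ℒ ψ = ℒ ϑ := by
    have h1 : Tendsto (fun n => ℒ (Θ n)) atTop (𝓝 (ℒ ψ)) := (hℒc.tendsto ψ).comp hψ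
    have h2 : Tendsto (fun n => ℒ (Θ n)) atTop (𝓝 (ℒ ϑ)) := by
      have h3 : (fun n => ℒ (Θ n)) = fun n => e n + ℒ ϑ := by
        funext n; simp only [he_def]; ring
      rw [h3]
      simpa using heQ.add tendsto_const_nhds
    exact tendsto_nhds_unique h1 h2
  have hΘR : ∀ n, ‖Θ n - ϑ‖ ≤ D * 𝔠 ^ (1 - α) + ‖Θ 0 - ϑ‖ := by
    intro n
    have h1 := htel n
    have h2 := hSb n
    linarith
  have hψB : ψ ∈ B := by
    apply hmemB
    have h1 : Tendsto (fun n => ‖Θ n - ϑ‖) atTop (𝓝 ‖ψ - ϑ‖) :=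
      (hψ.sub tendsto_const_nhds).norm
    have h2 := le_of_tendsto h1 (Filter.Eventually.of_forall hΘR)
    calc ‖ψ - ϑ‖ ≤ D * 𝔠 ^ (1 - α) + ‖Θ 0 - ϑ‖ := h2
      _ < ε / (γ * L + 1) := hsize
      _ ≤ ε := hconv
  have hGψ : 𝒢 ψ = 0 := by
    have h1 : Tendsto (fun n => 𝒢 (Θ n)) atTop (𝓝 (𝒢 ψ)) := by
      rw [tendsto_iff_norm_sub_tendsto_zero]
      apply squeeze_zero (fun n => norm_nonneg _) (fun n => h𝒢lip _ (hmemAll n) ψ hψB)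
      have h2 : Tendsto (fun n => ‖Θ n - ψ‖) atTop (𝓝 0) := by
        have := (hψ.sub (tendsto_const_nhds : Tendsto (fun _ : ℕ => ψ) atTop (𝓝 ψ))).norm
        simpa using this
      simpa using h2.const_mul L
    have h3 : Tendsto (fun n => 𝒢 (Θ n)) atTop (𝓝 0) := by
      rw [tendsto_zero_iff_norm_tendsto_zero]
      have h4 : Tendsto (fun n => ‖Θ (n+1) - Θ n‖) atTop (𝓝 0) := hsummable.tendsto_atTop_zero
      have h5 : (fun n => ‖𝒢 (Θ n)‖) = fun n => γ⁻¹ * ‖Θ (n+1) - Θ n‖ := by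
        funext n; rw [hstepnorm n]; field_simp
      rw [h5]
      simpa using h4.const_mul γ⁻¹
    exact tendsto_nhds_unique h1 h3
  -- final chain bound
  have hchain : ∀ n : ℕ, D * e n ^ (1 - α) ≤
      (2:ℝ) ^ (2 - α) * C ^ (3 - 2 * α) * 𝔠 ^ (2 - 2 * α) * (1 - α)⁻¹ *
        ((if 𝔠 = 0 then (1:ℝ) else 0) + 𝔠 ^ (2 * α) * n * γ + 2 * C ^ 2 * 𝔠) ^ (α - 1) := by
    intro n
    rcases eq_or_lt_of_le h𝔠nn with h0 | hpos
    · have hz : e n = 0 := le_antisymm (by rw [h0]; exact heb n) (heAll n)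
      rw [hz, ← h0]
      rw [Real.zero_rpow (by linarith : (1:ℝ) - α ≠ 0),
        Real.zero_rpow (by nlinarith : (2:ℝ) - 2*α ≠ 0)]
      simp
    · have h1 := hrate n
      set Q : ℝ := (if 𝔠 = 0 then (1:ℝ) else 0) + 𝔠 ^ (2 * α) * n * γ + 2 * C ^ 2 * 𝔠 with hQ_def
      clear_value Q
      have hQp : 0 < Q := by
        rw [hQ_def, if_neg hpos.ne']
        have := hQpos' hpos n
        linarith
      have h2 : e n ^ (1 - α) ≤ (2 * C ^ 2 * 𝔠 ^ 2 / Q) ^ (1 - α) :=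
        Real.rpow_le_rpow (heAll n) h1 (by linarith)
      have h3 : (2 * C ^ 2 * 𝔠 ^ 2 / Q) ^ ((1:ℝ) - α)
          = (2 * C ^ 2 * 𝔠 ^ 2) ^ ((1:ℝ) - α) * Q ^ (α - 1) := by
        rw [Real.div_rpow (by positivity) hQp.le,
          show (α - 1) = -(1 - α) by ring, Real.rpow_neg hQp.le]
        ring
      have h4 : ((2:ℝ) * C ^ 2 * 𝔠 ^ 2) ^ ((1:ℝ) - α)
          = 2 ^ ((1:ℝ) - α) * C ^ ((2:ℝ) - 2*α) * 𝔠 ^ ((2:ℝ) - 2*α) := by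
        rw [Real.mul_rpow (by positivity) (by positivity),
          Real.mul_rpow (by positivity) (by positivity)]
        have hc2 : ((C:ℝ) ^ (2:ℕ)) ^ ((1:ℝ) - α) = C ^ ((2:ℝ) - 2*α) := by
          rw [← Real.rpow_natCast C 2, ← Real.rpow_mul hC.le]
          norm_num
          ring_nf
        have hg2 : ((𝔠:ℝ) ^ (2:ℕ)) ^ ((1:ℝ) - α) = 𝔠 ^ ((2:ℝ) - 2*α) := by
          rw [← Real.rpow_natCast 𝔠 2, ← Real.rpow_mul h𝔠nn]
          norm_num
          ring_nf
        rw [hc2, hg2]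
      have h5 : D * ((2:ℝ) ^ ((1:ℝ) - α) * C ^ ((2:ℝ) - 2*α) * 𝔠 ^ ((2:ℝ) - 2*α))
          = (2:ℝ) ^ (2 - α) * C ^ (3 - 2 * α) * 𝔠 ^ (2 - 2 * α) * (1 - α)⁻¹ := by
        rw [hD_def]
        have h2a : (2:ℝ) ^ ((2:ℝ) - α) = 2 * 2 ^ ((1:ℝ) - α) := by
          rw [show (2:ℝ) - α = 1 + (1 - α) by ring, Real.rpow_add (by norm_num : (0:ℝ) < 2),
            Real.rpow_one]
        have h2c : (C:ℝ) ^ ((3:ℝ) - 2*α) = C * C ^ ((2:ℝ) - 2*α) := by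
          rw [show (3:ℝ) - 2*α = 1 + (2 - 2*α) by ring, Real.rpow_add hC, Real.rpow_one]
        rw [h2a, h2c]
        ring
      calc D * e n ^ (1 - α) ≤ D * ((2 * C ^ 2 * 𝔠 ^ 2 / Q) ^ ((1:ℝ) - α)) :=
            mul_le_mul_of_nonneg_left h2 hD.le
        _ = D * ((2:ℝ) ^ ((1:ℝ) - α) * C ^ ((2:ℝ) - 2*α) * 𝔠 ^ ((2:ℝ) - 2*α)) * Q ^ (α - 1) := by
            rw [h3, h4]; ring
        _ = (2:ℝ) ^ (2 - α) * C ^ (3 - 2 * α) * 𝔠 ^ (2 - 2 * α) * (1 - α)⁻¹ * Q ^ (α - 1) := by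
            rw [h5]
  -- assemble
  have hlsub : ∀ n, ℒ (Θ n) - ℒ ψ = e n := by
    intro n; rw [hLψ, he_def]
  have habs' : ∀ n, |ℒ (Θ n) - ℒ ψ| = e n := by
    intro n; rw [hlsub n]; exact abs_of_nonneg (heAll n)
  refine ⟨ψ, hLψ, hGψ, hmemAll, ?_, ?_⟩
  · intro n
    constructor
    · rw [hlsub n]; exact heAll n
    · rw [hlsub n]; exact hrate n
  · intro n
    refine ⟨hsummable, hdistψ n, ?_, ?_⟩
    · rw [habs' n]
      exact htsum_le n
    · rw [habs' n]
      exact hchain n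
end

section
/- Let 𝔡 ∈ ℕ, ε, L, C ∈ (0, ∞), α ∈ (0, 1), ϑ ∈ ℝ^𝔡, let B = {θ ∈ ℝ^𝔡 : ‖θ − ϑ‖ < ε}, let ℒ ∈ C(ℝ^𝔡, ℝ) satisfy ℒ|_B ∈ C¹(B, ℝ), let 𝒢 : ℝ^𝔡 → ℝ^𝔡 satisfy for all θ ∈ B that 𝒢(θ) = (∇ℒ)(θ), assume for all θ_1, θ_2 ∈ B that ‖𝒢(θ_1) − 𝒢(θ_2)‖ ≤ L‖θ_1 − θ_2‖, for every θ ∈ ℝ^𝔡 and γ ∈ ℝ let Θ^{γ,θ} : ℕ₀ → ℝ^𝔡 satisfy Θ^{γ,θ}_0 = θ and Θ^{γ,θ}_{n+1} = Θ^{γ,θ}_n − γ𝒢(Θ^{γ,θ}_n) for all n ∈ ℕ₀, and assume for all θ ∈ B that |ℒ(θ) − ℒ(ϑ)|^α ≤ C‖𝒢(θ)‖ and ℒ(θ) ≥ ℒ(ϑ). Then there exist δ, 𝒞 ∈ (0, ∞) such that for all θ ∈ ℝ^𝔡 with ‖θ − ϑ‖ < δ, all γ ∈ (0, L^{−1}],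 and all n ∈ ℕ₀ it holds that 0 ≤ ℒ(Θ^{γ,θ}_n) − ℒ(ϑ) ≤ 𝒞(1 + γn)^{−1}. -/
open MeasureTheory Filter Topology

section Aux

private lemma descent_step {d : ℕ} {L : ℝ}
    {B : Set (EuclideanSpace ℝ (Fin d))} {ℒ : EuclideanSpace ℝ (Fin d) → ℝ}
    {𝒢 : EuclideanSpace ℝ (Fin d) → EuclideanSpace ℝ (Fin d)}
    (hgrad : ∀ y ∈ B, HasGradientAt ℒ (𝒢 y) y)
    (h𝒢lip : ∀ θ₁ ∈ B, ∀ θ₂ ∈ B, ‖𝒢 θ₁ - 𝒢 θ₂‖ ≤ L * ‖θ₁ - θ₂‖)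
    (x v : EuclideanSpace ℝ (Fin d)) (hseg : ∀ t ∈ Set.Icc (0:ℝ) 1, x + t • v ∈ B) :
    ℒ (x + v) ≤ ℒ x + (inner ℝ (𝒢 x) v : ℝ) + L / 2 * ‖v‖ ^ 2 := by
  set a : ℝ := (inner ℝ (𝒢 x) v : ℝ) with ha
  set ψ : ℝ → ℝ := fun t => ℒ (x + t • v) - t * a - L / 2 * ‖v‖ ^ 2 * t ^ 2 with hψ
  have hxB : x ∈ B := by simpa using hseg 0 (by norm_num)
  have key : ∀ t ∈ Set.Icc (0:ℝ) 1,
      HasDerivAt ψ ((inner ℝ (𝒢 (x + t • v)) v : ℝ) - a - L * ‖v‖ ^ 2 * t) t := by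
    intro t ht
    have hcurve : HasDerivAt (fun s : ℝ => x + s • v) v t := by
      simpa using ((hasDerivAt_id t).smul_const v).const_add x
    have hgy := (hgrad _ (hseg t ht)).hasFDerivAt
    have hcomp := hgy.comp_hasDerivAt t hcurve
    have h1 : HasDerivAt (fun s : ℝ => s * a) a t := by
      simpa using (hasDerivAt_id t).mul_const a
    have h2 : HasDerivAt (fun s : ℝ => L / 2 * ‖v‖ ^ 2 * s ^ 2)
        (L / 2 * ‖v‖ ^ 2 * (2 * t)) t := by
      have := (hasDerivAt_pow 2 t).const_mul (L / 2 * ‖v‖ ^ 2)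
      simpa [mul_comm, mul_assoc, mul_left_comm] using this
    have h3 := (hcomp.sub h1).sub h2
    have e3 : (inner ℝ (𝒢 (x + t • v)) v : ℝ) - a - L * ‖v‖ ^ 2 * t =
        ((InnerProductSpace.toDual ℝ (EuclideanSpace ℝ (Fin d))) (𝒢 (x + t • v))) v - a
          - L / 2 * ‖v‖ ^ 2 * (2 * t) := by
      rw [InnerProductSpace.toDual_apply_apply]
      ring
    rw [e3]
    exact h3
  have h10 : ψ 1 ≤ ψ 0 := by
    have hanti : AntitoneOn ψ (Set.Icc 0 1) := by
      apply antitoneOn_of_deriv_nonpos (convex_Icc 0 1)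
      · intro t ht
        exact (key t ht).continuousAt.continuousWithinAt
      · intro t ht
        rw [interior_Icc] at ht
        exact (key t (Set.mem_Icc_of_Ioo ht)).differentiableAt.differentiableWithinAt
      · intro t ht
        rw [interior_Icc] at ht
        rw [(key t (Set.mem_Icc_of_Ioo ht)).deriv]
        have hy : x + t • v ∈ B := hseg t (Set.mem_Icc_of_Ioo ht)
        have hlip := h𝒢lip _ hy _ hxB
        have h1 : (inner ℝ (𝒢 (x + t • v)) v : ℝ) - a = (inner ℝ (𝒢 (x + t • v) - 𝒢 x) v : ℝ) := by
          rw [inner_sub_left]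
        have h2 : (inner ℝ (𝒢 (x + t • v) - 𝒢 x) v : ℝ) ≤ ‖𝒢 (x + t • v) - 𝒢 x‖ * ‖v‖ :=
          real_inner_le_norm _ _
        have h3 : ‖x + t • v - x‖ = t * ‖v‖ := by
          have : x + t • v - x = t • v := by abel
          rw [this, norm_smul, Real.norm_eq_abs, abs_of_nonneg ht.1.le]
        rw [h3] at hlip
        have h4 : ‖𝒢 (x + t • v) - 𝒢 x‖ * ‖v‖ ≤ L * (t * ‖v‖) * ‖v‖ :=
          mul_le_mul_of_nonneg_right hlip (norm_nonneg _)
        have h5 : L * (t * ‖v‖) * ‖v‖ = L * ‖v‖ ^ 2 * t := by ring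
        rw [h1]
        linarith [h2.trans h4]
    exact hanti (by norm_num) (by norm_num) zero_le_one
  have hψ0 : ψ 0 = ℒ x := by simp [hψ]
  have hψ1 : ψ 1 = ℒ (x + v) - a - L / 2 * ‖v‖ ^ 2 := by simp [hψ]
  rw [hψ0, hψ1] at h10
  linarith

end Aux

set_option maxHeartbeats 2000000

/-- Local convergence rate of gradient descent started near a local minimum
satisfying a Kurdyka–Łojasiewicz inequality, uniformly in the starting point and step size. -/
theorem stmt19 (𝔡 : ℕ) (ε L C α : ℝ)
    (hε : 0 < ε) (hL : 0 < L) (hC : 0 < C) (hα : α ∈ Set.Ioo (0:ℝ) 1)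
    (ϑ : EuclideanSpace ℝ (Fin 𝔡)) (B : Set (EuclideanSpace ℝ (Fin 𝔡)))
    (hB : B = {θ : EuclideanSpace ℝ (Fin 𝔡) | ‖θ - ϑ‖ < ε})
    (ℒ : EuclideanSpace ℝ (Fin 𝔡) → ℝ) (hℒc : Continuous ℒ) (hℒ1 : ContDiffOn ℝ 1 ℒ B)
    (𝒢 : EuclideanSpace ℝ (Fin 𝔡) → EuclideanSpace ℝ (Fin 𝔡))
    (h𝒢grad : ∀ θ ∈ B, 𝒢 θ = gradient ℒ θ)
    (h𝒢lip : ∀ θ₁ ∈ B, ∀ θ₂ ∈ B, ‖𝒢 θ₁ - 𝒢 θ₂‖ ≤ L * ‖θ₁ - θ₂‖)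
    (Θ : ℝ → EuclideanSpace ℝ (Fin 𝔡) → ℕ → EuclideanSpace ℝ (Fin 𝔡))
    (hΘ0 : ∀ γ θ, Θ γ θ 0 = θ)
    (hΘrec : ∀ γ θ n, Θ γ θ (n + 1) = Θ γ θ n - γ • 𝒢 (Θ γ θ n))
    (hKL : ∀ θ ∈ B, |ℒ θ - ℒ ϑ| ^ α ≤ C * ‖𝒢 θ‖)
    (hmin : ∀ θ ∈ B, ℒ ϑ ≤ ℒ θ) :
    ∃ δ 𝒞 : ℝ, 0 < δ ∧ 0 < 𝒞 ∧
      ∀ θ : EuclideanSpace ℝ (Fin 𝔡), ‖θ - ϑ‖ < δ →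
        ∀ γ ∈ Set.Ioc (0:ℝ) L⁻¹, ∀ n : ℕ,
          0 ≤ ℒ (Θ γ θ n) - ℒ ϑ ∧ ℒ (Θ γ θ n) - ℒ ϑ ≤ 𝒞 / (1 + γ * n) := by
  obtain ⟨hα0, hα1⟩ := hα
  have h1α : 0 < 1 - α := by linarith
  have hBopen : IsOpen B := by
    rw [hB]
    exact isOpen_lt ((continuous_id.sub continuous_const).norm) continuous_const
  have hϑB : ϑ ∈ B := by rw [hB]; simpa using hε
  have hgrad : ∀ y ∈ B, HasGradientAt ℒ (𝒢 y) y := by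
    intro y hy
    rw [h𝒢grad y hy]
    exact ((hℒ1.differentiableOn one_ne_zero).differentiableAt (hBopen.mem_nhds hy)).hasGradientAt
  have hzero : ∀ p ∈ B, ℒ p ≤ ℒ ϑ → 𝒢 p = 0 := by
    intro p hp hple
    have hlm : IsLocalMin ℒ p :=
      Filter.eventually_of_mem (hBopen.mem_nhds hp) fun q hq => hple.trans (hmin q hq)
    have h0 := hlm.hasFDerivAt_eq_zero (hgrad p hp).hasFDerivAt
    exact (LinearIsometryEquiv.map_eq_zero_iff _).1 h0
  have h𝒢ϑ : 𝒢 ϑ = 0 := hzero ϑ hϑB le_rfl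
  -- constants
  set β : ℝ := α / (1 - α) with hβdef
  have hβ : 0 < β := div_pos hα0 h1α
  set K : ℝ := 2 * C / (1 - α) with hKdef
  have hK : 0 < K := by positivity
  set r : ℝ := min 1 ((ε * (1 - α) / (8 * C)) ^ β) with hrdef
  have hr : 0 < r := lt_min one_pos (Real.rpow_pos_of_pos (by positivity) _)
  set δ : ℝ := min (ε / 4) (r / (C * L)) with hδdef
  have hδ : 0 < δ := lt_min (by positivity) (by positivity)
  have hδε4 : δ ≤ ε / 4 := min_le_left _ _
  have hCLδ : 0 < C * L * δ := by positivity
  have hCLδ_r : C * L * δ ≤ r := by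
    have h1 : δ ≤ r / (C * L) := min_le_right _ _
    calc C * L * δ ≤ C * L * (r / (C * L)) := by
          apply mul_le_mul_of_nonneg_left h1 (by positivity)
      _ = r := by field_simp
  set E : ℝ := (C * L * δ) ^ (1 / α) with hEdef
  have hEpos : 0 < E := Real.rpow_pos_of_pos hCLδ _
  have hE1 : E ≤ 1 :=
    Real.rpow_le_one hCLδ.le (hCLδ_r.trans (min_le_left _ _)) (by positivity)
  have hE2 : K * E ^ (1 - α) ≤ ε / 4 := by
    have hexp : (1 / α) * (1 - α) = 1 / β := by
      rw [hβdef]; field_simp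
    have h2 : E ^ (1 - α) ≤ ε * (1 - α) / (8 * C) := by
      have h3 : C * L * δ ≤ (ε * (1 - α) / (8 * C)) ^ β := hCLδ_r.trans (min_le_right _ _)
      rw [hEdef, ← Real.rpow_mul hCLδ.le, hexp]
      calc (C * L * δ) ^ (1 / β) ≤ ((ε * (1 - α) / (8 * C)) ^ β) ^ (1 / β) :=
            Real.rpow_le_rpow hCLδ.le h3 (by positivity)
        _ = (ε * (1 - α) / (8 * C)) ^ (β * (1 / β)) := by
            rw [← Real.rpow_mul (by positivity : (0:ℝ) ≤ ε * (1 - α) / (8 * C))]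
        _ = ε * (1 - α) / (8 * C) := by
            rw [mul_one_div, div_self hβ.ne', Real.rpow_one]
    calc K * E ^ (1 - α) ≤ K * (ε * (1 - α) / (8 * C)) :=
          mul_le_mul_of_nonneg_left h2 hK.le
      _ = ε / 4 := by rw [hKdef]; field_simp; ring
  set R : ℝ := δ + K * E ^ (1 - α) with hRdef
  have hRpos : 0 < R := by positivity
  have hR2 : 2 * R ≤ ε := by
    rw [hRdef]; linarith
  set 𝒞 : ℝ := max 1 (2 * C ^ 2) with h𝒞def
  have h𝒞 : 0 < 𝒞 := lt_of_lt_of_le one_pos (le_max_left _ _)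
  have h𝒞1 : (1:ℝ) ≤ 𝒞 := le_max_left _ _
  have h𝒞2 : 2 * C ^ 2 ≤ 𝒞 := le_max_right _ _
  clear_value β K r δ E R 𝒞
  refine ⟨δ, 𝒞, hδ, h𝒞, ?_⟩
  intro θ hθ γ hγ
  obtain ⟨hγ0, hγL'⟩ := hγ
  have hγL : γ * L ≤ 1 := by
    calc γ * L ≤ L⁻¹ * L := mul_le_mul_of_nonneg_right hγL' hL.le
      _ = 1 := inv_mul_cancel₀ hL.ne'
  set s : ℝ := γ / (2 * C ^ 2) with hsdef
  have hs : 0 < s := by rw [hsdef]; positivity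
  clear_value s
  set e : ℕ → ℝ := fun n => ℒ (Θ γ θ n) - ℒ ϑ with hedef
  clear_value e
  have hθB : θ ∈ B := by
    rw [hB]
    exact hθ.trans_le (by linarith)
  have he0E : e 0 ≤ E := by
    have h1 : |e 0| ^ α ≤ C * ‖𝒢 θ‖ := by
      simpa [hedef, hΘ0] using hKL θ hθB
    have h2 : ‖𝒢 θ‖ ≤ L * ‖θ - ϑ‖ := by
      simpa [h𝒢ϑ] using h𝒢lip θ hθB ϑ hϑB
    have h3 : 0 ≤ e 0 := by
      simp only [hedef, hΘ0]
      exact sub_nonneg.2 (hmin θ hθB)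
    rw [abs_of_nonneg h3] at h1
    have h4 : e 0 ^ α ≤ C * L * δ := by
      have h41 := mul_le_mul_of_nonneg_left h2 hC.le
      have h42 : L * ‖θ - ϑ‖ ≤ L * δ := mul_le_mul_of_nonneg_left hθ.le hL.le
      have h43 : C * (L * ‖θ - ϑ‖) ≤ C * (L * δ) := mul_le_mul_of_nonneg_left h42 hC.le
      have h44 : C * (L * δ) = C * L * δ := by ring
      linarith [h1, h41, h43, h44]
    have h5 : (e 0 ^ α) ^ (1 / α) = e 0 := by
      rw [← Real.rpow_mul h3, mul_one_div, div_self hα0.ne', Real.rpow_one]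
    calc e 0 = (e 0 ^ α) ^ (1 / α) := h5.symm
      _ ≤ E := by
          rw [hEdef]
          exact Real.rpow_le_rpow (Real.rpow_nonneg h3 _) h4 (by positivity)
  have he00 : 0 ≤ e 0 := by
    simp only [hedef, hΘ0]
    exact sub_nonneg.2 (hmin θ hθB)
  have main : ∀ n : ℕ, ‖Θ γ θ n - ϑ‖ + K * (e n) ^ (1 - α) < R ∧ 0 ≤ e n ∧ e n ≤ 1 ∧
      e n * (1 + s * n) ≤ 1 := by
    intro n
    induction n with
    | zero =>
      refine ⟨?_, he00, he0E.trans hE1, ?_⟩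
      · rw [hΘ0, hRdef]
        have : (e 0) ^ (1 - α) ≤ E ^ (1 - α) := Real.rpow_le_rpow he00 he0E h1α.le
        have := mul_le_mul_of_nonneg_left this hK.le
        linarith
      · simpa using he0E.trans hE1
    | succ n ih =>
      obtain ⟨ih1, ih2, ih3, ih4⟩ := ih
      set x := Θ γ θ n with hx
      clear_value x
      have hVnn : 0 ≤ K * (e n) ^ (1 - α) := by positivity
      have hxR : ‖x - ϑ‖ < R := by linarith
      have hxB : x ∈ B := by
        rw [hB]
        exact hxR.trans_le (by linarith)
      have hgL : ‖𝒢 x‖ ≤ L * ‖x - ϑ‖ := by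
        simpa [h𝒢ϑ] using h𝒢lip x hxB ϑ hϑB
      have hseg : ∀ t ∈ Set.Icc (0:ℝ) 1, x + t • (-(γ • 𝒢 x)) ∈ B := by
        intro t ht
        rw [hB]
        show ‖x + t • (-(γ • 𝒢 x)) - ϑ‖ < ε
        have heq : x + t • (-(γ • 𝒢 x)) - ϑ = (x - ϑ) + (-(t * γ)) • 𝒢 x := by
          rw [smul_neg, smul_smul, ← neg_smul, add_sub_right_comm]
        rw [heq]
        have h1 : ‖(x - ϑ) + (-(t * γ)) • 𝒢 x‖ ≤ ‖x - ϑ‖ + ‖(-(t * γ)) • 𝒢 x‖ := norm_add_le _ _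
        have h2 : ‖(-(t * γ)) • 𝒢 x‖ = t * γ * ‖𝒢 x‖ := by
          rw [norm_smul, Real.norm_eq_abs, abs_neg, abs_of_nonneg (mul_nonneg ht.1 hγ0.le)]
        have h3 : t * γ * ‖𝒢 x‖ ≤ γ * (L * ‖x - ϑ‖) := by
          have h31 : t * γ ≤ 1 * γ := mul_le_mul_of_nonneg_right ht.2 hγ0.le
          calc t * γ * ‖𝒢 x‖ ≤ γ * ‖𝒢 x‖ :=
                mul_le_mul_of_nonneg_right (by linarith) (norm_nonneg _)
            _ ≤ γ * (L * ‖x - ϑ‖) := mul_le_mul_of_nonneg_left hgL hγ0.le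
        have h4 : γ * (L * ‖x - ϑ‖) ≤ ‖x - ϑ‖ := by
          have := mul_le_mul_of_nonneg_right hγL (norm_nonneg (x - ϑ))
          linarith [this]
        calc ‖(x - ϑ) + (-(t * γ)) • 𝒢 x‖ ≤ ‖x - ϑ‖ + ‖x - ϑ‖ := by linarith [h1, h2 ▸ h3.trans h4]
          _ < 2 * R := by linarith
          _ ≤ ε := hR2
      have hrec : Θ γ θ (n + 1) = x + (-(γ • 𝒢 x)) := by
        rw [hΘrec, ← hx, sub_eq_add_neg]
      have hdes0 := descent_step hgrad h𝒢lip x (-(γ • 𝒢 x)) hseg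
      have hinner : (inner ℝ (𝒢 x) (-(γ • 𝒢 x)) : ℝ) = -(γ * ‖𝒢 x‖ ^ 2) := by
        rw [inner_neg_right, real_inner_smul_right, real_inner_self_eq_norm_sq]
      have hnrm : ‖-(γ • 𝒢 x)‖ ^ 2 = γ ^ 2 * ‖𝒢 x‖ ^ 2 := by
        rw [norm_neg, norm_smul, Real.norm_eq_abs, abs_of_nonneg hγ0.le, mul_pow]
      have hen : e n = ℒ x - ℒ ϑ := by simp [hedef, hx]
      have hen1 : e (n + 1) = ℒ (x + (-(γ • 𝒢 x))) - ℒ ϑ := by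
        simp only [hedef]
        rw [hrec]
      have hdes : e (n + 1) ≤ e n - γ / 2 * ‖𝒢 x‖ ^ 2 := by
        rw [hinner, hnrm] at hdes0
        have hLg : L / 2 * (γ ^ 2 * ‖𝒢 x‖ ^ 2) ≤ γ / 2 * ‖𝒢 x‖ ^ 2 := by
          have := mul_le_mul_of_nonneg_right hγL
            (mul_nonneg hγ0.le (sq_nonneg ‖𝒢 x‖))
          linarith [this]
        rw [hen1, hen]
        linarith
      have hxB1 : Θ γ θ (n + 1) ∈ B := by
        rw [hrec]
        simpa using hseg 1 ⟨zero_le_one, le_rfl⟩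
      have hb0 : 0 ≤ e (n + 1) := by
        have h := sub_nonneg.2 (hmin _ hxB1)
        rw [hrec] at h
        rw [hen1]
        exact h
      have hba : e (n + 1) ≤ e n := by
        have := mul_nonneg hγ0.le (sq_nonneg ‖𝒢 x‖)
        linarith [hdes, this]
      rcases eq_or_lt_of_le ih2 with h0 | hpos
      · -- e n = 0 : gradient vanishes, iterate is fixed
        have hG0 : 𝒢 x = 0 := by
          apply hzero x hxB
          have : ℒ x - ℒ ϑ = 0 := by rw [← hen, ← h0]
          linarith
        have hfix : Θ γ θ (n + 1) = x := by
          rw [hrec, hG0]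
          simp
        have hee : e (n + 1) = e n := by
          rw [hen1, hen, hG0]
          simp
        refine ⟨?_, hb0, hee ▸ ih3, ?_⟩
        · rw [hfix, hee]; exact ih1
        · rw [hee, ← h0]; simp
      · -- 0 < e n
        have hKLn : (e n) ^ α ≤ C * ‖𝒢 x‖ := by
          have h := hKL x hxB
          rw [abs_of_nonneg (show (0:ℝ) ≤ ℒ x - ℒ ϑ by rw [← hen]; exact ih2), ← hen] at h
          exact h
        have hg0 : 0 < ‖𝒢 x‖ := by
          have h1 : 0 < (e n) ^ α := Real.rpow_pos_of_pos hpos α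
          have h2 : 0 < C * ‖𝒢 x‖ := lt_of_lt_of_le h1 hKLn
          by_contra hgg
          push_neg at hgg
          have h3 : ‖𝒢 x‖ = 0 := le_antisymm hgg (norm_nonneg _)
          rw [h3, mul_zero] at h2
          exact absurd h2 (lt_irrefl 0)
        have heCg : e n ≤ C * ‖𝒢 x‖ := by
          have h7 : (e n) ^ (1:ℝ) ≤ (e n) ^ α :=
            Real.rpow_le_rpow_of_exponent_ge hpos ih3 hα1.le
          rw [Real.rpow_one] at h7
          exact h7.trans hKLn
        have hsq : (e n) ^ 2 ≤ C ^ 2 * ‖𝒢 x‖ ^ 2 := by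
          have h8 := mul_self_le_mul_self ih2 heCg
          have h9 : (C * ‖𝒢 x‖) * (C * ‖𝒢 x‖) = C ^ 2 * ‖𝒢 x‖ ^ 2 := by ring
          have h10 : (e n) ^ 2 = e n * e n := pow_two (e n)
          linarith [h8, h9, h10]
        have hdes2 : e (n + 1) ≤ e n - s * (e n) ^ 2 := by
          have h1 : s * (e n) ^ 2 ≤ γ / 2 * ‖𝒢 x‖ ^ 2 := by
            have := mul_le_mul_of_nonneg_left hsq (by positivity : (0:ℝ) ≤ s)
            have hse : s * (C ^ 2 * ‖𝒢 x‖ ^ 2) = γ / 2 * ‖𝒢 x‖ ^ 2 := by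
              rw [hsdef]; field_simp
            linarith
          linarith
        -- Lyapunov decrease
        have hΔ : γ * ‖𝒢 x‖ ≤ K * ((e n) ^ (1 - α) - (e (n + 1)) ^ (1 - α)) := by
          have hgm : (e n) ^ α * (e (n + 1)) ^ (1 - α) ≤ α * e n + (1 - α) * e (n + 1) :=
            Real.geom_mean_le_arith_mean2_weighted hα0.le h1α.le hpos.le hb0 (by ring)
          have haa : (e n) ^ α * (e n) ^ (1 - α) = e n := by
            rw [← Real.rpow_add hpos]; norm_num
          have hVd : 0 ≤ (e n) ^ (1 - α) - (e (n + 1)) ^ (1 - α) :=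
            sub_nonneg.2 (Real.rpow_le_rpow hb0 hba h1α.le)
          have key1 : (1 - α) * (e n - e (n + 1)) ≤
              (e n) ^ α * ((e n) ^ (1 - α) - (e (n + 1)) ^ (1 - α)) := by
            have hexp2 : (e n) ^ α * ((e n) ^ (1 - α) - (e (n + 1)) ^ (1 - α)) =
                e n - (e n) ^ α * (e (n + 1)) ^ (1 - α) := by
              rw [mul_sub, haa]
            rw [hexp2]
            linarith
          have key2 : (1 - α) * (e n - e (n + 1)) ≤
              (C * ‖𝒢 x‖) * ((e n) ^ (1 - α) - (e (n + 1)) ^ (1 - α)) :=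
            key1.trans (mul_le_mul_of_nonneg_right hKLn hVd)
          have key3 : (1 - α) * (γ / 2 * ‖𝒢 x‖ ^ 2) ≤
              (C * ‖𝒢 x‖) * ((e n) ^ (1 - α) - (e (n + 1)) ^ (1 - α)) := by
            have : (1 - α) * (γ / 2 * ‖𝒢 x‖ ^ 2) ≤ (1 - α) * (e n - e (n + 1)) :=
              mul_le_mul_of_nonneg_left (by linarith [hdes]) h1α.le
            linarith
          -- cancel one factor of ‖𝒢 x‖
          have key4 : (1 - α) * (γ / 2 * ‖𝒢 x‖) ≤
              C * ((e n) ^ (1 - α) - (e (n + 1)) ^ (1 - α)) := by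
            rw [← mul_le_mul_iff_of_pos_right hg0]
            linarith [key3]
          rw [hKdef, div_mul_eq_mul_div, le_div_iff₀ h1α]
          linarith [key4]
        have new1 : ‖Θ γ θ (n + 1) - ϑ‖ + K * (e (n + 1)) ^ (1 - α) < R := by
          have hnd : ‖Θ γ θ (n + 1) - ϑ‖ ≤ ‖x - ϑ‖ + γ * ‖𝒢 x‖ := by
            rw [hrec]
            have heq : x + (-(γ • 𝒢 x)) - ϑ = (x - ϑ) + (-γ) • 𝒢 x := by
              rw [← neg_smul, add_sub_right_comm]
            rw [heq]
            have := norm_add_le (x - ϑ) ((-γ) • 𝒢 x)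
            have h2 : ‖(-γ) • 𝒢 x‖ = γ * ‖𝒢 x‖ := by
              rw [norm_smul, Real.norm_eq_abs, abs_neg, abs_of_nonneg hγ0.le]
            linarith
          have hKsub : K * (e (n + 1)) ^ (1 - α) ≤ K * (e n) ^ (1 - α) - γ * ‖𝒢 x‖ := by
            have := hΔ
            rw [mul_sub] at this
            linarith
          linarith
        refine ⟨new1, hb0, hba.trans ih3, ?_⟩
        rcases eq_or_lt_of_le hb0 with hb00 | hbpos
        · rw [← hb00, zero_mul]; exact zero_le_one
        · set u : ℝ := 1 + s * n with hudef
          have hu : 0 < u := by rw [hudef]; positivity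
          clear_value u
          have F2 : e (n + 1) * (1 + s * e n) ≤ e n := by
            have h7 := mul_le_mul_of_nonneg_left hba (mul_nonneg hs.le hpos.le)
            linarith [hdes2, h7]
          have hble : e (n + 1) ≤ e n / (1 + s * e n) := by
            rw [le_div_iff₀ (by positivity)]
            exact F2
          have hstep : e n / (1 + s * e n) * (u + s) ≤ 1 := by
            rw [div_mul_eq_mul_div, div_le_one (by positivity)]
            linarith [ih4]
          have hfin : e (n + 1) * (u + s) ≤ 1 :=
            le_trans (mul_le_mul_of_nonneg_right hble (by positivity)) hstep
          have hcast : (1 : ℝ) + s * ((n : ℕ) + 1 : ℕ) = u + s := by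
            push_cast [hudef]; ring
          rw [hcast]
          exact hfin
  intro n
  obtain ⟨h1, h2, h3, h4⟩ := main n
  have hen : e n = ℒ (Θ γ θ n) - ℒ ϑ := by simp only [hedef]
  rw [← hen]
  refine ⟨h2, ?_⟩
  have hpos1 : 0 < 1 + γ * (n:ℝ) := by positivity
  rw [le_div_iff₀ hpos1]
  have hCs : γ ≤ 𝒞 * s := by
    rw [hsdef, ← mul_div_assoc, le_div_iff₀ (by positivity : (0:ℝ) < 2 * C ^ 2)]
    have := mul_le_mul_of_nonneg_right h𝒞2 hγ0.le
    linarith [this]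
  have A : 𝒞 * (e n * (1 + s * n)) ≤ 𝒞 * 1 := mul_le_mul_of_nonneg_left h4 h𝒞.le
  have Bh : 0 ≤ (𝒞 * s - γ) * (e n * n) :=
    mul_nonneg (sub_nonneg.2 hCs) (mul_nonneg h2 (Nat.cast_nonneg n))
  have Ch : 0 ≤ (𝒞 - 1) * e n := mul_nonneg (sub_nonneg.2 h𝒞1) h2
  linarith [A, Bh, Ch]
end
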